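/- arXiv:2406.14911 — 3 statements merged into one kernel-verified Lean document; each statement's English description precedes it below -/
import Mathlib

section
/- Every well-formed parsing expression grammar is complete; that is, if a PEG G contains no directly or mutually left-recursive rules, then R(e, w) is defined (the recursive computation of R terminates) for every expression e of G and every word w ∈ Σ*, and in particular R(S, w) is defined for every input w. -/
/-! ### Parsing expression grammars -/

/-- Parsing expressions over nonterminals `N` and input alphabet `A`:
`ε`, terminals, nonterminals, sequence, prioritized choice, not-predicate. -/
inductive PExp (N A : Type) : Type where
  | eps : PExp N A
  | term : A → PExp N A
  | nt : N → PExp N A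
  | seq : PExp N A → PExp N A → PExp N A
  | choice : PExp N A → PExp N A → PExp N A
  | not : PExp N A → PExp N A

/-- A parsing expression grammar: one rule per nonterminal, and an axiom. -/
structure PEG (N A : Type) : Type where
  rule : N → PExp N A
  start : N

/-- Big-step relational semantics of the PEG parsing function `R`:
`Parses G e w r` means `R(e, w) = r`, where `r = none` encodes the failure `F`
and `r = some s` means that `e` consumed a prefix of `w` leaving the suffix `s`.
`R(e, w)` is defined iff `∃ r, Parses G e w r`. -/
inductive Parses {N A : Type} (G : PEG N A) : PExp N A → List A → Option (List A) → Prop where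
  | eps (w : List A) : Parses G .eps w (some w)
  | term_ok (a : A) (s : List A) : Parses G (.term a) (a :: s) (some s)
  | term_mismatch {a b : A} (s : List A) (h : a ≠ b) : Parses G (.term a) (b :: s) none
  | term_nil (a : A) : Parses G (.term a) [] none
  | nt {B : N} {w : List A} {r : Option (List A)} :
      Parses G (G.rule B) w r → Parses G (.nt B) w r
  | seq_ok {e₁ e₂ : PExp N A} {w w' : List A} {r : Option (List A)} :
      Parses G e₁ w (some w') → Parses G e₂ w' r → Parses G (.seq e₁ e₂) w r
  | seq_fail {e₁ e₂ : PExp N A} {w : List A} :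
      Parses G e₁ w none → Parses G (.seq e₁ e₂) w none
  | choice_fst {e₁ e₂ : PExp N A} {w w' : List A} :
      Parses G e₁ w (some w') → Parses G (.choice e₁ e₂) w (some w')
  | choice_snd {e₁ e₂ : PExp N A} {w : List A} {r : Option (List A)} :
      Parses G e₁ w none → Parses G e₂ w r → Parses G (.choice e₁ e₂) w r
  | not_succ {e : PExp N A} {w : List A} :
      Parses G e w none → Parses G (.not e) w (some w)
  | not_fail {e : PExp N A} {w w' : List A} :
      Parses G e w (some w') → Parses G (.not e) w none

/-- The language generated by a PEG: `L(G) = {w | R(S, w) = ε}`. -/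
def PEG.Lang {N A : Type} (G : PEG N A) : Set (List A) :=
  {w | Parses G (.nt G.start) w (some [])}

/-- A PEG is complete if `R(S, w)` is defined for every input `w`. -/
def PEG.Complete {N A : Type} (G : PEG N A) : Prop :=
  ∀ w : List A, ∃ r, Parses G (.nt G.start) w r

/-- Conservative test whether an expression could succeed without consuming input. -/
def PExp.maybeEmpty {N A : Type} : PExp N A → Bool
  | .eps => true
  | .term _ => false
  | .nt _ => true
  | .seq e₁ e₂ => e₁.maybeEmpty && e₂.maybeEmpty
  | .choice e₁ e₂ => e₁.maybeEmpty || e₂.maybeEmpty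
  | .not _ => true

/-- The nonterminals that an expression can invoke without first consuming input. -/
def PExp.leftNts {N A : Type} : PExp N A → Set N
  | .eps => ∅
  | .term _ => ∅
  | .nt B => {B}
  | .seq e₁ e₂ => e₁.leftNts ∪ (if e₁.maybeEmpty then e₂.leftNts else ∅)
  | .choice e₁ e₂ => e₁.leftNts ∪ e₂.leftNts
  | .not e => e.leftNts

/-- A PEG is well-formed if it has no (directly or mutually) left-recursive rules:
no nonterminal can reach an invocation of itself without consuming input. -/
def PEG.WellFormed {N A : Type} (G : PEG N A) : Prop :=
  ∀ B : N, ¬ Relation.TransGen (fun X Y : N => Y ∈ (G.rule X).leftNts) B B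

/-- Auxiliary: `R(e,w)` is defined with a good result: any success leaves a
suffix of `w`, and leaving `w` unchanged forces `e.maybeEmpty`. -/
def PEGDefined {N A : Type} (G : PEG N A) (e : PExp N A) (w : List A) : Prop :=
  ∃ r, Parses G e w r ∧
    ∀ w', r = some w' → w' <:+ w ∧ (w' = w → e.maybeEmpty = true)

lemma peg_step {N A : Type} (G : PEG N A) (w : List A)
    (IHw : ∀ v : List A, v.length < w.length → ∀ e, PEGDefined G e v)
    (e : PExp N A)
    (IHnt : ∀ Y ∈ e.leftNts, PEGDefined G (.nt Y) w) :
    PEGDefined G e w := by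
  induction e with
  | eps =>
      exact ⟨some w, .eps w, fun w' hw' => by
        cases hw'; exact ⟨List.suffix_refl _, fun _ => rfl⟩⟩
  | term a =>
      cases w with
      | nil => exact ⟨none, .term_nil a, by simp⟩
      | cons b s =>
          by_cases hab : a = b
          · subst hab
            refine ⟨some s, .term_ok a s, fun w' hw' => ?_⟩
            cases hw'
            refine ⟨List.suffix_cons a s, fun h => ?_⟩
            exact absurd (congrArg List.length h) (by simp)
          · exact ⟨none, .term_mismatch s hab, by simp⟩
  | nt B =>
      obtain ⟨r, hr, hg⟩ := IHnt B (by simp [PExp.leftNts])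
      exact ⟨r, hr, fun w' hw' => ⟨(hg w' hw').1, fun _ => rfl⟩⟩
  | seq e₁ e₂ ih₁ ih₂ =>
      have h₁ : PEGDefined G e₁ w := by
        refine ih₁ (fun Y hY => IHnt Y ?_)
        exact Or.inl hY
      obtain ⟨r₁, hr₁, hg₁⟩ := h₁
      cases r₁ with
      | none => exact ⟨none, .seq_fail hr₁, by simp⟩
      | some w' =>
          obtain ⟨hsuf, hme⟩ := hg₁ w' rfl
          by_cases hww : w' = w
          · subst hww
            have hme₁ := hme rfl
            have h₂ : PEGDefined G e₂ w' := by
              refine ih₂ (fun Y hY => IHnt Y ?_)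
              right
              simp [hme₁] at *
              exact hY
            obtain ⟨r₂, hr₂, hg₂⟩ := h₂
            refine ⟨r₂, .seq_ok hr₁ hr₂, fun w'' hw'' => ?_⟩
            obtain ⟨hs, he⟩ := hg₂ w'' hw''
            exact ⟨hs, fun hq => by
              simp [PExp.maybeEmpty, hme₁, he hq]⟩
          · have hlt : w'.length < w.length := by
              have := List.IsSuffix.length_le hsuf
              rcases lt_or_eq_of_le this with h | h
              · exact h
              · exact absurd (List.IsSuffix.eq_of_length hsuf h) hww
            obtain ⟨r₂, hr₂, hg₂⟩ := IHw w' hlt e₂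
            refine ⟨r₂, .seq_ok hr₁ hr₂, fun w'' hw'' => ?_⟩
            obtain ⟨hs, _⟩ := hg₂ w'' hw''
            refine ⟨hs.trans hsuf, fun hq => ?_⟩
            exact absurd (hq ▸ List.IsSuffix.length_le hs) (not_le.mpr hlt)
  | choice e₁ e₂ ih₁ ih₂ =>
      have h₁ : PEGDefined G e₁ w := ih₁ (fun Y hY => IHnt Y (Or.inl hY))
      obtain ⟨r₁, hr₁, hg₁⟩ := h₁
      cases r₁ with
      | some w' =>
          refine ⟨some w', .choice_fst hr₁, fun w'' hw'' => ?_⟩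
          cases hw''
          obtain ⟨hs, he⟩ := hg₁ w' rfl
          exact ⟨hs, fun hq => by simp [PExp.maybeEmpty, he hq]⟩
      | none =>
          have h₂ : PEGDefined G e₂ w := ih₂ (fun Y hY => IHnt Y (Or.inr hY))
          obtain ⟨r₂, hr₂, hg₂⟩ := h₂
          refine ⟨r₂, .choice_snd hr₁ hr₂, fun w'' hw'' => ?_⟩
          obtain ⟨hs, he⟩ := hg₂ w'' hw''
          exact ⟨hs, fun hq => by simp [PExp.maybeEmpty, he hq]⟩
  | not e ih =>
      have h : PEGDefined G e w := ih (fun Y hY => IHnt Y hY)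
      obtain ⟨r, hr, hg⟩ := h
      cases r with
      | none =>
          exact ⟨some w, .not_succ hr, fun w' hw' => by
            cases hw'; exact ⟨List.suffix_refl _, fun _ => rfl⟩⟩
      | some w' => exact ⟨none, .not_fail hr, by simp⟩

lemma peg_defined {N A : Type} [Finite N] (G : PEG N A)
    (hG : G.WellFormed) : ∀ (w : List A) (e : PExp N A), PEGDefined G e w := by
  -- well-foundedness of the left-call relation
  set r : N → N → Prop := fun Y X => Y ∈ (G.rule X).leftNts with hr
  have hirr : ∀ B, ¬ Relation.TransGen r B B := by
    intro B hB
    exact hG B ((Relation.transGen_swap).mpr hB)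
  haveI : IsTrans N (Relation.TransGen r) := inferInstance
  haveI : IsIrrefl N (Relation.TransGen r) := ⟨hirr⟩
  have hwf : WellFounded (Relation.TransGen r) :=
    Finite.wellFounded_of_trans_of_irrefl _
  have hwfr : WellFounded r :=
    Subrelation.wf (fun h => Relation.TransGen.single h) hwf
  -- strong induction on the length of the word
  have main : ∀ (n : ℕ) (w : List A), w.length = n → ∀ e, PEGDefined G e w := by
    intro n
    induction n using Nat.strong_induction_on with
    | _ n IH =>
    intro w hn
    subst hn
    have IHw : ∀ v : List A, v.length < w.length → ∀ e, PEGDefined G e v :=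
      fun v hv e => IH v.length hv v rfl e
    have hnt : ∀ B : N, PEGDefined G (.nt B) w := by
      intro B
      induction B using hwfr.induction with
      | _ B IHB =>
          have hD : PEGDefined G (G.rule B) w :=
            peg_step G w IHw _ (fun Y hY => IHB Y hY)
          obtain ⟨rb, hrb, hgb⟩ := hD
          exact ⟨rb, .nt hrb, fun w' hw' => ⟨(hgb w' hw').1, fun _ => rfl⟩⟩
    intro e
    exact peg_step G w IHw e (fun Y _ => hnt Y)
  exact fun w e => main w.length w rfl e

/-- Every well-formed PEG (with finitely many nonterminals) is
complete: `R(e, w)` is defined for every expression `e` and every word `w`, and in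
particular `R(S, w)` is defined for every input `w`. -/
theorem wellFormed_complete {N A : Type} [Finite N] (G : PEG N A)
    (hG : G.WellFormed) :
    (∀ (e : PExp N A) (w : List A), ∃ r, Parses G e w r) ∧ G.Complete := by
  have h := peg_defined G hG
  constructor
  · intro e w
    obtain ⟨r, hr, _⟩ := h w e
    exact ⟨r, hr⟩
  · intro w
    obtain ⟨r, hr, _⟩ := h w (.nt G.start)
    exact ⟨r, hr⟩
end

section
/- Every deterministic context-free language is a parsing expression language: for every DPDA A there exists a parsing expression grammar G with L(G) = L(A). -/
/-- A language is a parsing expression language (PEL) if it is generated by some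
well-formed PEG with a finite set of nonterminals. -/
def IsPEL {A : Type} (L : Set (List A)) : Prop :=
  ∃ (N : Type) (_ : Finite N) (G : PEG N A), G.WellFormed ∧ G.Lang = L

/-! ### Standard deterministic pushdown automata -/

/-- A standard one-way deterministic pushdown automaton accepting by final state,
with reading transitions `transA` and ε-transitions `transE`; determinism requires
that no ε-move is available whenever a reading move is. -/
structure DPDA (Q A Γ : Type) : Type where
  transA : Q → A → Γ → Option (Q × List Γ)
  transE : Q → Γ → Option (Q × List Γ)
  det : ∀ q Z, transE q Z ≠ none → ∀ a, transA q a Z = none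
  init : Q
  Z0 : Γ
  final : Q → Bool

/-- One move of a DPDA on configurations `(state, stack, remaining input)`. -/
inductive DPDA.Step {Q A Γ : Type} (M : DPDA Q A Γ) :
    Q × List Γ × List A → Q × List Γ × List A → Prop where
  | readA {q : Q} {a : A} {Z : Γ} {γ : List Γ} {u : List A} {p : Q} {β : List Γ} :
      M.transA q a Z = some (p, β) → DPDA.Step M (q, Z :: γ, a :: u) (p, β ++ γ, u)
  | readE {q : Q} {Z : Γ} {γ : List Γ} {u : List A} {p : Q} {β : List Γ} :
      M.transE q Z = some (p, β) → DPDA.Step M (q, Z :: γ, u) (p, β ++ γ, u)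

/-- The language of a DPDA: words after whose consumption a final state is reached. -/
def DPDA.Lang {Q A Γ : Type} (M : DPDA Q A Γ) : Set (List A) :=
  {w | ∃ (p : Q) (γ : List Γ),
    Relation.ReflTransGen (DPDA.Step M) (M.init, [M.Z0], w) (p, γ, []) ∧ M.final p = true}

/-- A language is a DCFL if it is recognized by some DPDA with finitely many
states and stack symbols. -/
def IsDCFL {A : Type} (L : Set (List A)) : Prop :=
  ∃ (Q Γ : Type) (_ : Finite Q) (_ : Finite Γ) (M : DPDA Q A Γ), M.Lang = L


/-! ### Auxiliary development -/

section Aux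

open Relation

/-! #### Generic PEG lemmas -/

namespace PEGAux

variable {N A : Type} {G : PEG N A}

theorem parses_det {e : PExp N A} {w : List A} {r₁ r₂ : Option (List A)}
    (h₁ : Parses G e w r₁) (h₂ : Parses G e w r₂) : r₁ = r₂ := by
  induction h₁ generalizing r₂ with
  | eps w => cases h₂; rfl
  | term_ok a s => cases h₂ with
    | term_ok => rfl
    | term_mismatch s h => exact absurd rfl h
  | term_mismatch s h => cases h₂ with
    | term_ok => exact absurd rfl h
    | term_mismatch => rfl
  | term_nil a => cases h₂; rfl
  | nt h ih => cases h₂ with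
    | nt h' => exact ih h'
  | seq_ok h₁ h₂' ih₁ ih₂ => cases h₂ with
    | seq_ok g₁ g₂ =>
      have := ih₁ g₁; injection this with this; subst this; exact ih₂ g₂
    | seq_fail g₁ => exact absurd (ih₁ g₁) (by simp)
  | seq_fail h ih => cases h₂ with
    | seq_ok g₁ g₂ => exact absurd (ih g₁) (by simp)
    | seq_fail g₁ => rfl
  | choice_fst h ih => cases h₂ with
    | choice_fst g => exact ih g
    | choice_snd g₁ g₂ => exact absurd (ih g₁) (by simp)
  | choice_snd h₁ h₂' ih₁ ih₂ => cases h₂ with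
    | choice_fst g => exact absurd (ih₁ g) (by simp)
    | choice_snd g₁ g₂ => exact ih₂ g₂
  | not_succ h ih => cases h₂ with
    | not_succ g => rfl
    | not_fail g => exact absurd (ih g) (by simp)
  | not_fail h ih => cases h₂ with
    | not_succ g => exact absurd (ih g) (by simp)
    | not_fail g => rfl

/-- A parsing expression that always fails. -/
def pfail : PExp N A := .not .eps

theorem parses_pfail (w : List A) : Parses G pfail w none :=
  .not_fail (.eps w)

/-- Ordered choice over a list of expressions. -/
def bigChoice : List (PExp N A) → PExp N A
  | [] => pfail
  | e :: l => .choice e (bigChoice l)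

theorem bigChoice_map_fail {ι : Type} {l : List ι} {f : ι → PExp N A} {w : List A}
    (h : ∀ j ∈ l, Parses G (f j) w none) :
    Parses G (bigChoice (l.map f)) w none := by
  induction l with
  | nil => exact parses_pfail w
  | cons j l ih =>
      exact .choice_snd (h j (by simp)) (ih fun j' hj' => h j' (by simp [hj']))

theorem bigChoice_map_succ {ι : Type} {l : List ι} {f : ι → PExp N A} {w u : List A} {i : ι}
    (hi : i ∈ l) (hs : Parses G (f i) w (some u))
    (hf : ∀ j ∈ l, j ≠ i → Parses G (f j) w none) :
    Parses G (bigChoice (l.map f)) w (some u) := by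
  induction l with
  | nil => cases hi
  | cons j l ih =>
      by_cases hji : j = i
      · subst hji; exact .choice_fst hs
      · rcases List.mem_cons.1 hi with rfl | hi'
        · exact absurd rfl hji
        · exact .choice_snd (hf j (by simp) hji)
            (ih hi' fun j' hj' => hf j' (by simp [hj']))

/-- An expression matching any single terminal from the list `aL`. -/
def anyE (aL : List A) : PExp N A := bigChoice (aL.map .term)

/-- End-of-input test. -/
def eofE (aL : List A) : PExp N A := .not (anyE aL)

theorem parses_any_nil (aL : List A) : Parses G (anyE aL) [] none :=
  bigChoice_map_fail fun a _ => .term_nil a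

theorem parses_any_cons {aL : List A} {a : A} (ha : a ∈ aL) (w : List A) :
    Parses G (anyE aL) (a :: w) (some w) :=
  bigChoice_map_succ ha (.term_ok a w) fun b _ hba => .term_mismatch w hba

theorem parses_eof_nil (aL : List A) : Parses G (eofE aL) [] (some []) :=
  .not_succ (parses_any_nil aL)

theorem parses_eof_cons {aL : List A} {a : A} (ha : a ∈ aL) (w : List A) :
    Parses G (eofE aL) (a :: w) none :=
  .not_fail (parses_any_cons ha w)

theorem parses_eof_iff {aL : List A} (ha : ∀ a, a ∈ aL) (w : List A) :
    ∃ r, Parses G (eofE aL) w r ∧ ∀ u, (r = some u ↔ (u = [] ∧ w = [])) := by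
  cases w with
  | nil => exact ⟨some [], parses_eof_nil aL, by simp⟩
  | cons a w => exact ⟨none, parses_eof_cons (ha a) w, by simp⟩

theorem leftNts_pfail : (pfail : PExp N A).leftNts = ∅ := by
  simp [pfail, PExp.leftNts]

theorem leftNts_guarded (a : A) (e : PExp N A) :
    (PExp.seq (.term a) e).leftNts = ∅ := by
  simp [PExp.leftNts, PExp.maybeEmpty]

theorem leftNts_bigChoice {l : List (PExp N A)} (h : ∀ e ∈ l, e.leftNts = ∅) :
    (bigChoice l).leftNts = ∅ := by
  induction l with
  | nil => exact leftNts_pfail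
  | cons e l ih =>
      simp only [bigChoice, PExp.leftNts, h e (by simp),
        ih fun e' he' => h e' (by simp [he'])]
      simp

theorem leftNts_eofE (aL : List A) : (eofE aL : PExp N A).leftNts = ∅ := by
  have : (anyE aL : PExp N A).leftNts = ∅ := by
    refine leftNts_bigChoice ?_
    intro e he
    rcases List.mem_map.1 he with ⟨a, _, rfl⟩
    simp [PExp.leftNts]
  simpa [eofE, PExp.leftNts] using this

end PEGAux

/-! #### Deterministic relations -/

theorem rtg_linear {α : Type*} {r : α → α → Prop}
    (hdet : ∀ a b c, r a b → r a c → b = c) {a b c : α}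
    (h₁ : ReflTransGen r a b) (h₂ : ReflTransGen r a c) :
    ReflTransGen r b c ∨ ReflTransGen r c b := by
  induction h₁ with
  | refl => exact .inl h₂
  | tail hab' hr ih =>
      rcases ih with h | h
      · rcases h.cases_head with rfl | ⟨d, hd, hdc⟩
        · exact .inr (ReflTransGen.refl.tail hr)
        · rw [hdet _ _ _ hr hd]; exact .inl hdc
      · exact .inr (h.tail hr)

theorem rtg_terminal_eq {α : Type*} {r : α → α → Prop}
    (hdet : ∀ a b c, r a b → r a c → b = c) {a b c : α}
    (h₁ : ReflTransGen r a b) (h₂ : ReflTransGen r a c)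
    (tb : ∀ d, ¬ r b d) (tc : ∀ d, ¬ r c d) : b = c := by
  rcases rtg_linear hdet h₁ h₂ with h | h <;>
    rcases h.cases_head with h' | ⟨d, hd, _⟩
  · exact h'
  · exact absurd hd (tb d)
  · exact h'.symm
  · exact absurd hd (tc d)

/-! #### DPDA run lemmas -/

namespace DPDAAux

variable {Q A Γ : Type} (M : DPDA Q A Γ)

theorem step_det {c d₁ d₂ : Q × List Γ × List A}
    (h₁ : M.Step c d₁) (h₂ : M.Step c d₂) : d₁ = d₂ := by
  cases h₁ with
  | readA h1 => cases h₂ with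
    | readA h2 => rw [h1] at h2; injection h2 with h2; simp_all
    | readE h2 => exact absurd h1 (by rw [M.det _ _ (by simp [h2]) _]; simp)
  | readE h1 => cases h₂ with
    | readA h2 => exact absurd h2 (by rw [M.det _ _ (by simp [h1]) _]; simp)
    | readE h2 => rw [h1] at h2; injection h2 with h2; simp_all

theorem no_step_empty {q : Q} {u : List A} {d} : ¬ M.Step (q, [], u) d := by
  intro h; cases h

theorem run_empty {q : Q} {u : List A} {d} (h : ReflTransGen M.Step (q, [], u) d) :
    d = (q, [], u) := by
  rcases h.cases_head with rfl | ⟨c, hc, _⟩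
  · rfl
  · exact absurd hc (no_step_empty M)

theorem input_mono {c d : Q × List Γ × List A} (h : ReflTransGen M.Step c d) :
    d.2.2.length ≤ c.2.2.length := by
  induction h with
  | refl => exact le_refl _
  | tail _ hs ih => refine le_trans ?_ ih; cases hs <;> simp

/-- Lifting a run to a larger stack. -/
theorem run_lift {c d : Q × List Γ × List A} (h : ReflTransGen M.Step c d) (γ : List Γ) :
    ReflTransGen M.Step (c.1, c.2.1 ++ γ, c.2.2) (d.1, d.2.1 ++ γ, d.2.2) := by
  induction h with
  | refl => exact .refl
  | tail _ hs ih =>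
      refine ih.tail ?_
      cases hs with
      | readA h => simpa [List.append_assoc] using DPDA.Step.readA (M := M) (γ := _ ++ γ) h
      | readE h => simpa [List.append_assoc] using DPDA.Step.readE (M := M) (γ := _ ++ γ) h

/-- Splitting a run from a composite stack. -/
theorem run_split {γ : List Γ} {d c} (hr : ReflTransGen M.Step c d) :
    ∀ q β w, c = (q, β ++ γ, w) →
    (∃ r v, ReflTransGen M.Step (q, β, w) (r, [], v) ∧ ReflTransGen M.Step (r, γ, v) d) ∨
    (∃ p γ₁ u, d = (p, γ₁ ++ γ, u) ∧ γ₁ ≠ [] ∧ ReflTransGen M.Step (q, β, w) (p, γ₁, u)) := by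
  induction hr using Relation.ReflTransGen.head_induction_on with
  | refl =>
      intro q β w hc
      cases β with
      | nil => exact .inl ⟨q, w, .refl, by rw [hc]; simpa using Relation.ReflTransGen.refl⟩
      | cons Z β₁ => exact .inr ⟨q, Z :: β₁, w, hc, by simp, .refl⟩
  | head hs hrest ih =>
      intro q β w hc
      subst hc
      cases β with
      | nil => exact .inl ⟨q, w, .refl, ReflTransGen.head hs hrest⟩
      | cons Z β₁ =>
          cases hs with
          | @readA _ a _ _ u p βa h =>
              rcases ih p (βa ++ β₁) u (by simp) with
                ⟨r, v, h1, h2⟩ | ⟨p', γ₁, u', hd, hne, h1⟩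
              · exact .inl ⟨r, v, ReflTransGen.head (DPDA.Step.readA h) h1, h2⟩
              · exact .inr ⟨p', γ₁, u', hd, hne, ReflTransGen.head (DPDA.Step.readA h) h1⟩
          | @readE _ _ _ u p βa h =>
              rcases ih p (βa ++ β₁) w (by simp) with
                ⟨r, v, h1, h2⟩ | ⟨p', γ₁, u', hd, hne, h1⟩
              · exact .inl ⟨r, v, ReflTransGen.head (DPDA.Step.readE h) h1, h2⟩
              · exact .inr ⟨p', γ₁, u', hd, hne, ReflTransGen.head (DPDA.Step.readE h) h1⟩

/-- ε-moves, viewed as a relation on `Q × List Γ`. -/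
inductive EStep (M : DPDA Q A Γ) : Q × List Γ → Q × List Γ → Prop where
  | mk {q : Q} {Z : Γ} {γ : List Γ} {p : Q} {β : List Γ} :
      M.transE q Z = some (p, β) → EStep M (q, Z :: γ) (p, β ++ γ)

theorem estep_det {c d₁ d₂ : Q × List Γ} (h₁ : EStep M c d₁) (h₂ : EStep M c d₂) :
    d₁ = d₂ := by
  cases h₁ with
  | mk h1 => cases h₂ with
    | mk h2 => rw [h1] at h2; injection h2 with h2; simp_all

theorem no_estep_empty {q : Q} {d} : ¬ EStep M (q, []) d := by intro h; cases h

theorem no_estep_reads {r : Q} {Y : Γ} {δ : List Γ} (h : M.transE r Y = none) {d} :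
    ¬ EStep M (r, Y :: δ) d := by
  intro hs; cases hs with | mk h2 => rw [h] at h2; cases h2

theorem er_to_run {c d : Q × List Γ} (h : ReflTransGen (EStep M) c d) (w : List A) :
    ReflTransGen M.Step (c.1, c.2, w) (d.1, d.2, w) := by
  induction h with
  | refl => exact .refl
  | tail _ hs ih =>
      refine ih.tail ?_
      cases hs with
      | mk h => exact DPDA.Step.readE h

/-- First-read decomposition of a run. -/
theorem run_read_split {d c} (hr : ReflTransGen M.Step c d) :
    ∀ q δ w, c = (q, δ, w) →
    (ReflTransGen (EStep M) (q, δ) (d.1, d.2.1) ∧ d.2.2 = w) ∨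
    (∃ s Y δ' a w₂ pa βa, w = a :: w₂ ∧ ReflTransGen (EStep M) (q, δ) (s, Y :: δ') ∧
      M.transA s a Y = some (pa, βa) ∧ ReflTransGen M.Step (pa, βa ++ δ', w₂) d) := by
  induction hr using Relation.ReflTransGen.head_induction_on with
  | refl => intro q δ w hc; subst hc; exact .inl ⟨.refl, rfl⟩
  | head hs hrest ih =>
      intro q δ w hc
      subst hc
      cases hs with
      | readA h => exact .inr ⟨_, _, _, _, _, _, _, rfl, .refl, h, hrest⟩
      | readE h =>
          rcases ih _ _ _ rfl with ⟨h1, h2⟩ | ⟨s, Y, δ', a, w₂, pa, βa, rfl, h1, h2, h3⟩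
          · exact .inl ⟨ReflTransGen.head (EStep.mk h) h1, h2⟩
          · exact .inr ⟨s, Y, δ', a, w₂, pa, βa, rfl,
              ReflTransGen.head (EStep.mk h) h1, h2, h3⟩

/-- The ε-run from `(q, [Z])` pops the whole stack, ending in state `p`. -/
def PopsTo (q : Q) (Z : Γ) (p : Q) : Prop :=
  ReflTransGen (EStep M) (q, [Z]) (p, ([] : List Γ))

/-- The ε-run from `(q, [Z])` reaches a reading configuration `x`. -/
def ReadsCfg (q : Q) (Z : Γ) (x : Q × Γ × List Γ) : Prop :=
  ReflTransGen (EStep M) (q, [Z]) (x.1, x.2.1 :: x.2.2) ∧ M.transE x.1 x.2.1 = none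

/-- Some configuration on the ε-run from `(q, [Z])` (with nonempty stack) is final. -/
def BtF (q : Q) (Z : Γ) : Prop :=
  ∃ s δ, ReflTransGen (EStep M) (q, [Z]) (s, δ) ∧ δ ≠ [] ∧ M.final s = true

theorem popsTo_unique {q Z p p'} (h : PopsTo M q Z p) (h' : PopsTo M q Z p') : p = p' := by
  have h3 := rtg_terminal_eq (r := EStep M) (fun _ _ _ h h' => estep_det M h h') h h'
    (fun d hd => no_estep_empty M hd) (fun d hd => no_estep_empty M hd)
  exact congrArg Prod.fst h3

theorem readsCfg_unique {q Z x y} (h : ReadsCfg M q Z x) (h' : ReadsCfg M q Z y) : x = y := by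
  obtain ⟨x1, x2, x3⟩ := x
  obtain ⟨y1, y2, y3⟩ := y
  have h3 := rtg_terminal_eq (r := EStep M) (fun _ _ _ h h' => estep_det M h h') h.1 h'.1
    (fun d hd => no_estep_reads M h.2 hd) (fun d hd => no_estep_reads M h'.2 hd)
  simp_all

theorem pops_not_reads {q Z p x} (h : PopsTo M q Z p) (h' : ReadsCfg M q Z x) : False := by
  obtain ⟨x1, x2, x3⟩ := x
  have h3 := rtg_terminal_eq (r := EStep M) (fun _ _ _ h h' => estep_det M h h') h h'.1
    (fun d hd => no_estep_empty M hd) (fun d hd => no_estep_reads M h'.2 hd)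
  simp at h3

theorem reads_of_transA {q Z s Y δ' a pa βa}
    (hER : ReflTransGen (EStep M) (q, [Z]) (s, Y :: δ'))
    (h : M.transA s a Y = some (pa, βa)) : ReadsCfg M q Z (s, Y, δ') := by
  refine ⟨hER, ?_⟩
  by_contra hne
  have := M.det s Y hne a
  rw [h] at this; cases this

end DPDAAux

/-! #### The constructed grammar -/

namespace Build

open PEGAux DPDAAux

/-- Nonterminals of the constructed grammar. -/
inductive PNT (Q Γ : Type) : Type where
  | start : PNT Q Γ
  | c (q : Q) (Z : Γ) (p : Q) : PNT Q Γ
  | f (q : Q) (Z : Γ) : PNT Q Γ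

/-- Encoding of `PNT` into a sum type. -/
def PNT.toSum {Q Γ : Type} : PNT Q Γ → Unit ⊕ ((Q × Γ × Q) ⊕ (Q × Γ))
  | .start => Sum.inl ()
  | .c q Z p => Sum.inr (Sum.inl (q, Z, p))
  | .f q Z => Sum.inr (Sum.inr (q, Z))

instance instFinitePNT (Q Γ : Type) [Finite Q] [Finite Γ] : Finite (PNT Q Γ) := by
  have : Function.Injective (PNT.toSum (Q := Q) (Γ := Γ)) := by
    intro x y h
    cases x <;> cases y <;> simp_all [PNT.toSum]
  exact Finite.of_injective _ this

variable {Q A Γ : Type} (M : DPDA Q A Γ) (aL : List A) (qL : List Q)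

open Classical in
/-- Expression parsing the popping of the stack segment `δ` from state `s`, ending in `p`. -/
noncomputable def cseqE : Q → List Γ → Q → PExp (PNT Q Γ) A
  | s, [], p => if s = p then .eps else pfail
  | s, Y :: δ, p => bigChoice (qL.map fun r => .seq (.nt (.c s Y r)) (cseqE r δ p))

open Classical in
/-- Expression parsing acceptance strictly within the stack segment `δ` from state `s`. -/
noncomputable def fseqE : Q → List Γ → PExp (PNT Q Γ) A
  | _, [] => pfail
  | s, Y :: δ => .choice (.nt (.f s Y))
      (bigChoice (qL.map fun r => .seq (.nt (.c s Y r)) (fseqE r δ)))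

open Classical in
noncomputable def ruleC (q : Q) (Z : Γ) (p : Q) : PExp (PNT Q Γ) A :=
  if h : ∃ p', PopsTo M q Z p' then (if h.choose = p then .eps else pfail)
  else if h : ∃ x, ReadsCfg M q Z x then
    bigChoice (aL.map fun a => .seq (.term a)
      (match M.transA h.choose.1 a h.choose.2.1 with
        | some (pa, βa) => cseqE qL pa (βa ++ h.choose.2.2) p
        | none => pfail))
  else pfail

open Classical in
noncomputable def ruleF (q : Q) (Z : Γ) : PExp (PNT Q Γ) A :=
  .choice (if BtF M q Z then eofE aL else pfail)
    (if h : ∃ x, ReadsCfg M q Z x then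
      bigChoice (aL.map fun a => .seq (.term a)
        (match M.transA h.choose.1 a h.choose.2.1 with
          | some (pa, βa) => fseqE qL pa (βa ++ h.choose.2.2)
          | none => pfail))
    else pfail)

noncomputable def theRule : PNT Q Γ → PExp (PNT Q Γ) A
  | .start => .choice (.nt (.f M.init M.Z0))
      (bigChoice ((qL.filter fun p => M.final p).map fun p =>
        .seq (.nt (.c M.init M.Z0 p)) (eofE aL)))
  | .c q Z p => ruleC M aL qL q Z p
  | .f q Z => ruleF M aL qL q Z

/-- The constructed grammar. -/
noncomputable def theG : PEG (PNT Q Γ) A := ⟨theRule M aL qL, .start⟩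

theorem mem_leftNts_bigChoice {N : Type} {l : List (PExp N A)} {X : N}
    (h : X ∈ (bigChoice l).leftNts) : ∃ e ∈ l, X ∈ e.leftNts := by
  induction l with
  | nil => simp [bigChoice, pfail, PExp.leftNts] at h
  | cons e l ih =>
      simp only [bigChoice, PExp.leftNts, Set.mem_union] at h
      rcases h with h | h
      · exact ⟨e, by simp, h⟩
      · rcases ih h with ⟨e', he', hX⟩
        exact ⟨e', by simp [he'], hX⟩

theorem leftNts_ruleC (q : Q) (Z : Γ) (p : Q) : (ruleC M aL qL q Z p).leftNts = ∅ := by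
  unfold ruleC
  split
  · split <;> simp [pfail, PExp.leftNts]
  · split
    · refine leftNts_bigChoice ?_
      intro e he
      rcases List.mem_map.1 he with ⟨a, _, rfl⟩
      exact leftNts_guarded a _
    · simp [pfail, PExp.leftNts]

theorem leftNts_ruleF (q : Q) (Z : Γ) : (ruleF M aL qL q Z).leftNts = ∅ := by
  rw [ruleF, show ∀ e₁ e₂ : PExp (PNT Q Γ) A,
    (PExp.choice e₁ e₂).leftNts = e₁.leftNts ∪ e₂.leftNts from fun _ _ => rfl,
    Set.union_empty_iff]
  constructor
  · split
    · exact leftNts_eofE aL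
    · simp [pfail, PExp.leftNts]
  · split
    · refine leftNts_bigChoice ?_
      intro e he
      rcases List.mem_map.1 he with ⟨a, _, rfl⟩
      exact leftNts_guarded a _
    · simp [pfail, PExp.leftNts]

theorem rel_start {X Y : PNT Q Γ} (h : Y ∈ ((theG M aL qL).rule X).leftNts) :
    X = .start ∧ Y ≠ .start := by
  cases X with
  | start =>
      refine ⟨rfl, ?_⟩
      have h' : Y ∈ (PExp.nt (PNT.f M.init M.Z0)).leftNts ∪
          (bigChoice ((qL.filter fun p => M.final p).map fun p =>
            .seq (.nt (.c M.init M.Z0 p)) (eofE aL))).leftNts := h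
      rcases h' with h' | h'
      · rcases h' with rfl; simp
      · rcases mem_leftNts_bigChoice h' with ⟨e, he, hX⟩
        rcases List.mem_map.1 he with ⟨p, _, rfl⟩
        have : Y ∈ ({PNT.c M.init M.Z0 p} : Set (PNT Q Γ)) ∪
            (if (PExp.nt (PNT.c M.init M.Z0 p) : PExp (PNT Q Γ) A).maybeEmpty
              then (eofE aL : PExp (PNT Q Γ) A).leftNts else ∅) := hX
        rcases this with h2 | h2
        · rcases h2 with rfl; simp
        · simp [PExp.maybeEmpty, leftNts_eofE] at h2
  | c q Z p => rw [show (theG M aL qL).rule (.c q Z p) = ruleC M aL qL q Z p from rfl,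
      leftNts_ruleC] at h; cases h
  | f q Z => rw [show (theG M aL qL).rule (.f q Z) = ruleF M aL qL q Z from rfl,
      leftNts_ruleF] at h; cases h

theorem theG_wf : (theG M aL qL).WellFormed := by
  intro B hB
  obtain ⟨b, hab, hbB⟩ := Relation.TransGen.head'_iff.mp hB
  obtain ⟨hBs, hbs⟩ := rel_start M aL qL hab
  subst hBs
  rcases hbB.cases_head with h | ⟨c, hc, _⟩
  · exact hbs h
  · exact hbs (rel_start M aL qL hc).1


/-! #### Correctness of the constructed grammar -/

theorem pop_unique {q : Q} {δ : List Γ} {w : List A} {p₁ u₁ p₂ u₂}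
    (h₁ : ReflTransGen M.Step (q, δ, w) (p₁, [], u₁))
    (h₂ : ReflTransGen M.Step (q, δ, w) (p₂, [], u₂)) : p₁ = p₂ ∧ u₁ = u₂ := by
  have h3 := rtg_terminal_eq (r := M.Step) (fun _ _ _ h h' => step_det M h h') h₁ h₂
    (fun d hd => no_step_empty M hd) (fun d hd => no_step_empty M hd)
  exact ⟨congrArg (·.1) h3, congrArg (·.2.2) h3⟩

/-- Acceptance strictly inside the stack segment `δ`. -/
def Fspec (q : Q) (δ : List Γ) (w : List A) : Prop :=
  ∃ p γ, ReflTransGen M.Step (q, δ, w) (p, γ, []) ∧ M.final p = true ∧ γ ≠ []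

/-- Correctness statement for the `c` nonterminals at input `w`. -/
def CGood (w : List A) : Prop :=
  ∀ q Z p, ∃ r, Parses (theG M aL qL) (.nt (.c q Z p)) w r ∧
    ∀ u, (r = some u ↔ ReflTransGen M.Step (q, [Z], w) (p, [], u))

/-- Correctness statement for the `f` nonterminals at input `w`. -/
def FGood (w : List A) : Prop :=
  ∀ q Z, ∃ r, Parses (theG M aL qL) (.nt (.f q Z)) w r ∧
    ∀ u, (r = some u ↔ (u = [] ∧ Fspec M q [Z] w))

theorem cseq_good (hqL : ∀ q, q ∈ qL) (δ : List Γ) :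
    ∀ (s p : Q) (w : List A),
      (∀ v : List A, v.length ≤ w.length → CGood M aL qL v) →
      ∃ r, Parses (theG M aL qL) (cseqE qL s δ p) w r ∧
        ∀ u, (r = some u ↔ ReflTransGen M.Step (s, δ, w) (p, [], u)) := by
  induction δ with
  | nil =>
      intro s p w _
      rw [cseqE]
      by_cases hsp : s = p
      · rw [if_pos hsp]
        subst hsp
        refine ⟨some w, .eps w, fun u => ⟨?_, ?_⟩⟩
        · rintro ⟨rfl⟩; exact .refl
        · intro hrun
          have h6 := congrArg (·.2.2) (run_empty M hrun)
          simp only at h6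
          rw [h6]
      · rw [if_neg hsp]
        refine ⟨none, parses_pfail w, fun u => ⟨by simp, fun hrun => ?_⟩⟩
        have := run_empty M hrun
        exact absurd (congrArg (·.1) this) (by simpa using fun h => hsp h.symm)
  | cons Y δ' ihδ =>
      intro s p w IH
      rw [cseqE]
      classical
      by_cases hpop : ∃ x : Q × List A, ReflTransGen M.Step (s, [Y], w) (x.1, [], x.2)
      · obtain ⟨⟨r₁, v⟩, hr₁⟩ := hpop
        have hvlen : v.length ≤ w.length := input_mono M hr₁
        obtain ⟨rr, hrrP, hrrC⟩ := ihδ r₁ p v (fun v' hv' => IH v' (le_trans hv' hvlen))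
        obtain ⟨ρ₁, hρ₁P, hρ₁C⟩ := IH w le_rfl s Y r₁
        have hρ₁ : ρ₁ = some v := (hρ₁C v).mpr hr₁
        rw [hρ₁] at hρ₁P
        have hCother : ∀ j, j ≠ r₁ →
            Parses (theG M aL qL) (.nt (.c s Y j)) w none := by
          intro j hj
          obtain ⟨ρ, hρP, hρC⟩ := IH w le_rfl s Y j
          cases ρ with
          | none => exact hρP
          | some u' =>
              have hrun := (hρC u').mp rfl
              exact absurd (pop_unique M hrun hr₁).1 hj
        refine ⟨rr, ?_, ?_⟩
        · cases rr with
          | some u =>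
              exact bigChoice_map_succ (hqL r₁) (.seq_ok hρ₁P hrrP)
                (fun j _ hj => .seq_fail (hCother j hj))
          | none =>
              refine bigChoice_map_fail (fun j _ => ?_)
              by_cases hj : j = r₁
              · subst hj; exact .seq_ok hρ₁P hrrP
              · exact .seq_fail (hCother j hj)
        · intro u
          rw [hrrC u]
          constructor
          · intro hrest
            exact (run_lift M hr₁ δ').trans hrest
          · intro hrun
            rcases run_split M (γ := δ') hrun s [Y] w rfl with
              ⟨r₂, v₂, h1, h2⟩ | ⟨p', γ₁, u', hd, hne, h1⟩
            · obtain ⟨he1, he2⟩ := pop_unique M h1 hr₁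
              subst he1; subst he2
              exact h2
            · have h6 := congrArg (·.2.1) hd
              simp only at h6
              exact (hne (List.append_eq_nil_iff.mp h6.symm).1).elim
      · have hCnone : ∀ j, Parses (theG M aL qL) (.nt (.c s Y j)) w none := by
          intro j
          obtain ⟨ρ, hρP, hρC⟩ := IH w le_rfl s Y j
          cases ρ with
          | none => exact hρP
          | some u' => exact absurd ⟨(j, u'), (hρC u').mp rfl⟩ hpop
        refine ⟨none, bigChoice_map_fail (fun j _ => .seq_fail (hCnone j)), fun u => ⟨by simp, fun hrun => ?_⟩⟩
        rcases run_split M (γ := δ') hrun s [Y] w rfl with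
          ⟨r₂, v₂, h1, _⟩ | ⟨p', γ₁, u', hd, hne, h1⟩
        · exact absurd ⟨(r₂, v₂), h1⟩ hpop
        · have h6 := congrArg (·.2.1) hd
          simp only at h6
          exact (hne (List.append_eq_nil_iff.mp h6.symm).1).elim

theorem fseq_good (hqL : ∀ q, q ∈ qL) (δ : List Γ) :
    ∀ (s : Q) (w : List A),
      (∀ v : List A, v.length ≤ w.length → CGood M aL qL v ∧ FGood M aL qL v) →
      ∃ r, Parses (theG M aL qL) (fseqE qL s δ) w r ∧
        ∀ u, (r = some u ↔ (u = [] ∧ Fspec M s δ w)) := by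
  induction δ with
  | nil =>
      intro s w _
      rw [fseqE]
      refine ⟨none, parses_pfail w, fun u => ⟨by simp, fun ⟨_, p', γ', hrun, _, hγ⟩ => ?_⟩⟩
      exact absurd (congrArg (·.2.1) (run_empty M hrun)) (by simpa using hγ)
  | cons Y δ' ihδ =>
      intro s w IH
      rw [fseqE]
      classical
      obtain ⟨ρF, hρFP, hρFC⟩ := (IH w le_rfl).2 s Y
      by_cases hFs : Fspec M s [Y] w
      · have hρF : ρF = some [] := (hρFC []).mpr ⟨rfl, hFs⟩
        rw [hρF] at hρFP
        refine ⟨some [], .choice_fst hρFP, fun u => ⟨?_, by rintro ⟨rfl, _⟩; rfl⟩⟩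
        rintro ⟨rfl⟩
        obtain ⟨pf, γf, hrun, hfin, hγ⟩ := hFs
        exact ⟨rfl, pf, γf ++ δ', (run_lift M hrun δ' : _), hfin, by simp [hγ]⟩
      · have hρF : ρF = none := by
          cases ρF with
          | none => rfl
          | some u' => exact absurd ((hρFC u').mp rfl).2 hFs
        rw [hρF] at hρFP
        by_cases hpop : ∃ x : Q × List A, ReflTransGen M.Step (s, [Y], w) (x.1, [], x.2)
        · obtain ⟨⟨r₁, v⟩, hr₁⟩ := hpop
          have hvlen : v.length ≤ w.length := input_mono M hr₁
          obtain ⟨rr, hrrP, hrrC⟩ := ihδ r₁ v (fun v' hv' => IH v' (le_trans hv' hvlen))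
          obtain ⟨ρ₁, hρ₁P, hρ₁C⟩ := (IH w le_rfl).1 s Y r₁
          have hρ₁ : ρ₁ = some v := (hρ₁C v).mpr hr₁
          rw [hρ₁] at hρ₁P
          have hCother : ∀ j, j ≠ r₁ →
              Parses (theG M aL qL) (.nt (.c s Y j)) w none := by
            intro j hj
            obtain ⟨ρ, hρP, hρC⟩ := (IH w le_rfl).1 s Y j
            cases ρ with
            | none => exact hρP
            | some u' =>
                have hrun := (hρC u').mp rfl
                exact absurd (pop_unique M hrun hr₁).1 hj
          refine ⟨rr, ?_, ?_⟩
          · refine .choice_snd hρFP ?_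
            cases rr with
            | some u =>
                exact bigChoice_map_succ (hqL r₁) (.seq_ok hρ₁P hrrP)
                  (fun j _ hj => .seq_fail (hCother j hj))
            | none =>
                refine bigChoice_map_fail (fun j _ => ?_)
                by_cases hj : j = r₁
                · subst hj; exact .seq_ok hρ₁P hrrP
                · exact .seq_fail (hCother j hj)
          · intro u
            rw [hrrC u]
            constructor
            · rintro ⟨rfl, pf, γf, hrun, hfin, hγ⟩
              exact ⟨rfl, pf, γf, (run_lift M hr₁ δ').trans hrun, hfin, hγ⟩
            · rintro ⟨rfl, pf, γf, hrun, hfin, hγ⟩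
              rcases run_split M (γ := δ') hrun s [Y] w rfl with
                ⟨r₂, v₂, h1, h2⟩ | ⟨p', γ₁, u', hd, hne, h1⟩
              · obtain ⟨he1, he2⟩ := pop_unique M h1 hr₁
                subst he1; subst he2
                exact ⟨rfl, pf, γf, h2, hfin, hγ⟩
              · have h5 := congrArg (·.1) hd
                have h6 := congrArg (·.2.2) hd
                simp only at h5 h6
                rw [h5] at hfin
                rw [← h6] at h1
                exact absurd ⟨p', γ₁, h1, hfin, hne⟩ hFs
        · have hCnone : ∀ j, Parses (theG M aL qL) (.nt (.c s Y j)) w none := by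
            intro j
            obtain ⟨ρ, hρP, hρC⟩ := (IH w le_rfl).1 s Y j
            cases ρ with
            | none => exact hρP
            | some u' => exact absurd ⟨(j, u'), (hρC u').mp rfl⟩ hpop
          refine ⟨none, .choice_snd hρFP (bigChoice_map_fail (fun j _ => .seq_fail (hCnone j))),
            fun u => ⟨by simp, ?_⟩⟩
          rintro ⟨rfl, pf, γf, hrun, hfin, hγ⟩
          rcases run_split M (γ := δ') hrun s [Y] w rfl with
            ⟨r₂, v₂, h1, _⟩ | ⟨p', γ₁, u', hd, hne, h1⟩
          · exact absurd ⟨(r₂, v₂), h1⟩ hpop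
          · have h5 := congrArg (·.1) hd
            have h6 := congrArg (·.2.2) hd
            simp only at h5 h6
            rw [h5] at hfin
            rw [← h6] at h1
            exact absurd ⟨p', γ₁, h1, hfin, hne⟩ hFs

theorem c_step (haL : ∀ a, a ∈ aL) (hqL : ∀ q, q ∈ qL) (w : List A)
    (IH : ∀ v : List A, v.length < w.length → CGood M aL qL v ∧ FGood M aL qL v) :
    CGood M aL qL w := by
  intro q Z p
  classical
  by_cases hpops : ∃ p', PopsTo M q Z p'
  · have hrule : (theG M aL qL).rule (.c q Z p) =
        (if hpops.choose = p then .eps else pfail) := by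
      show ruleC M aL qL q Z p = _
      rw [ruleC, dif_pos hpops]
    have hp' : PopsTo M q Z hpops.choose := hpops.choose_spec
    have hrunp : ReflTransGen M.Step (q, [Z], w) (hpops.choose, [], w) := er_to_run M hp' w
    by_cases hpp : hpops.choose = p
    · refine ⟨some w, .nt ?_, fun u => ⟨?_, ?_⟩⟩
      · rw [hrule, if_pos hpp]; exact .eps w
      · rintro ⟨rfl⟩
        rw [hpp] at hrunp; exact hrunp
      · intro hrun
        rw [(pop_unique M hrun hrunp).2]
    · refine ⟨none, .nt ?_, fun u => ⟨by simp, fun hrun => ?_⟩⟩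
      · rw [hrule, if_neg hpp]; exact parses_pfail w
      · exact absurd (pop_unique M hrunp hrun).1 hpp
  · by_cases hreads : ∃ x, ReadsCfg M q Z x
    · have hx : ReadsCfg M q Z hreads.choose := hreads.choose_spec
      have hrule : (theG M aL qL).rule (.c q Z p) = bigChoice (aL.map fun a => .seq (.term a)
          (match M.transA hreads.choose.1 a hreads.choose.2.1 with
            | some (pa, βa) => cseqE qL pa (βa ++ hreads.choose.2.2) p
            | none => pfail)) := by
        show ruleC M aL qL q Z p = _
        rw [ruleC, dif_neg hpops, dif_pos hreads]
      cases w with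
      | nil =>
          refine ⟨none, .nt ?_, fun u => ⟨by simp, fun hrun => ?_⟩⟩
          · rw [hrule]; exact bigChoice_map_fail (fun a _ => .seq_fail (.term_nil a))
          · rcases run_read_split M hrun q [Z] [] rfl with ⟨h1, _⟩ |
              ⟨s, Y, δ', a, w₂, pa, βa, heq, _, _, _⟩
            · exact absurd ⟨p, h1⟩ hpops
            · cases heq
      | cons a₀ w₂ =>
          rcases htr : M.transA hreads.choose.1 a₀ hreads.choose.2.1 with _ | ⟨pa, βa⟩
          · refine ⟨none, .nt ?_, fun u => ⟨by simp, fun hrun => ?_⟩⟩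
            · rw [hrule]
              refine bigChoice_map_fail (fun a _ => ?_)
              by_cases hne : a = a₀
              · subst hne
                refine .seq_ok (.term_ok a w₂) ?_
                rw [htr]
                exact parses_pfail w₂
              · exact .seq_fail (.term_mismatch w₂ hne)
            · rcases run_read_split M hrun q [Z] (a₀ :: w₂) rfl with ⟨h1, _⟩ |
                ⟨s, Y, δ', a, w₂', pa', βa', heq, hER, htrA, hrest⟩
              · exact absurd ⟨p, h1⟩ hpops
              · have hxe := readsCfg_unique M (reads_of_transA M hER htrA) hx
                injection heq with h7 h8
                subst h7; subst h8
                have e1 := congrArg (·.1) hxe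
                have e2 := congrArg (·.2.1) hxe
                simp only at e1 e2
                rw [← e1, ← e2] at htr
                rw [htrA] at htr
                cases htr
          · obtain ⟨rr, hrrP, hrrC⟩ := cseq_good M aL qL hqL (βa ++ hreads.choose.2.2) pa p w₂
              (fun v hv => (IH v (by simp only [List.length_cons]; omega)).1)
            refine ⟨rr, .nt ?_, fun u => ?_⟩
            · rw [hrule]
              cases rr with
              | some u =>
                  refine bigChoice_map_succ (haL a₀) ?_
                    (fun a _ hne => .seq_fail (.term_mismatch w₂ hne))
                  refine .seq_ok (.term_ok a₀ w₂) ?_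
                  rw [htr]; exact hrrP
              | none =>
                  refine bigChoice_map_fail (fun a _ => ?_)
                  by_cases hne : a = a₀
                  · subst hne
                    refine .seq_ok (.term_ok a w₂) ?_
                    rw [htr]; exact hrrP
                  · exact .seq_fail (.term_mismatch w₂ hne)
            · rw [hrrC u]
              constructor
              · intro hrest
                have h1 : ReflTransGen M.Step (q, [Z], a₀ :: w₂)
                    (hreads.choose.1, hreads.choose.2.1 :: hreads.choose.2.2, a₀ :: w₂) :=
                  er_to_run M hx.1 _
                exact h1.trans (ReflTransGen.head (DPDA.Step.readA htr) hrest)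
              · intro hrun
                rcases run_read_split M hrun q [Z] (a₀ :: w₂) rfl with ⟨h1, _⟩ |
                  ⟨s, Y, δ', a, w₂', pa', βa', heq, hER, htrA, hrest⟩
                · exact absurd ⟨p, h1⟩ hpops
                · have hxe := readsCfg_unique M (reads_of_transA M hER htrA) hx
                  injection heq with h7 h8
                  subst h7; subst h8
                  have e1 := congrArg (·.1) hxe
                  have e2 := congrArg (·.2.1) hxe
                  have e3 := congrArg (·.2.2) hxe
                  simp only at e1 e2 e3
                  rw [← e1, ← e2] at htr
                  rw [htrA] at htr
                  injection htr with htr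
                  injection htr with h9 h10
                  subst h9; subst h10
                  rw [← e3]
                  exact hrest
    · refine ⟨none, .nt ?_, fun u => ⟨by simp, fun hrun => ?_⟩⟩
      · have hrule : (theG M aL qL).rule (.c q Z p) = pfail := by
          show ruleC M aL qL q Z p = _
          rw [ruleC, dif_neg hpops, dif_neg hreads]
        rw [hrule]; exact parses_pfail w
      · rcases run_read_split M hrun q [Z] w rfl with ⟨h1, _⟩ |
          ⟨s, Y, δ', a, w₂', pa', βa', heq, hER, htrA, hrest⟩
        · exact absurd ⟨p, h1⟩ hpops
        · exact absurd ⟨(s, Y, δ'), reads_of_transA M hER htrA⟩ hreads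

theorem f_step (haL : ∀ a, a ∈ aL) (hqL : ∀ q, q ∈ qL) (w : List A)
    (IH : ∀ v : List A, v.length < w.length → CGood M aL qL v ∧ FGood M aL qL v) :
    FGood M aL qL w := by
  intro q Z
  classical
  by_cases hreads : ∃ x, ReadsCfg M q Z x
  · have hx : ReadsCfg M q Z hreads.choose := hreads.choose_spec
    have hrule : (theG M aL qL).rule (.f q Z) = .choice
        (if BtF M q Z then eofE aL else pfail)
        (bigChoice (aL.map fun a => .seq (.term a)
          (match M.transA hreads.choose.1 a hreads.choose.2.1 with
            | some (pa, βa) => fseqE qL pa (βa ++ hreads.choose.2.2)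
            | none => pfail))) := by
      show ruleF M aL qL q Z = _
      rw [ruleF, dif_pos hreads]
    cases w with
    | nil =>
        by_cases hbt : BtF M q Z
        · refine ⟨some [], .nt ?_, fun u => ⟨?_, ?_⟩⟩
          · rw [hrule]
            exact .choice_fst (by rw [if_pos hbt]; exact parses_eof_nil aL)
          · rintro ⟨rfl⟩
            obtain ⟨s, δ, hER, hδ, hfin⟩ := hbt
            exact ⟨rfl, s, δ, er_to_run M hER [], hfin, hδ⟩
          · rintro ⟨rfl, _⟩; rfl
        · refine ⟨none, .nt ?_, fun u => ⟨by simp, ?_⟩⟩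
          · rw [hrule]
            refine .choice_snd (by rw [if_neg hbt]; exact parses_pfail []) ?_
            exact bigChoice_map_fail (fun a _ => .seq_fail (.term_nil a))
          · rintro ⟨rfl, pf, γf, hrun, hfin, hγ⟩
            rcases run_read_split M hrun q [Z] [] rfl with ⟨h1, _⟩ |
              ⟨s, Y, δ', a, w₂, pa, βa, heq, _, _, _⟩
            · exact absurd ⟨pf, γf, h1, hγ, hfin⟩ hbt
            · cases heq
    | cons a₀ w₂ =>
        have hE1 : Parses (theG M aL qL) (if BtF M q Z then eofE aL else pfail)
            (a₀ :: w₂) none := by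
          split
          · exact parses_eof_cons (haL a₀) w₂
          · exact parses_pfail _
        rcases htr : M.transA hreads.choose.1 a₀ hreads.choose.2.1 with _ | ⟨pa, βa⟩
        · refine ⟨none, .nt ?_, fun u => ⟨by simp, ?_⟩⟩
          · rw [hrule]
            refine .choice_snd hE1 ?_
            refine bigChoice_map_fail (fun a _ => ?_)
            by_cases hne : a = a₀
            · subst hne
              refine .seq_ok (.term_ok a w₂) ?_
              rw [htr]
              exact parses_pfail w₂
            · exact .seq_fail (.term_mismatch w₂ hne)
          · rintro ⟨rfl, pf, γf, hrun, hfin, hγ⟩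
            rcases run_read_split M hrun q [Z] (a₀ :: w₂) rfl with ⟨_, h2⟩ |
              ⟨s, Y, δ', a, w₂', pa', βa', heq, hER, htrA, hrest⟩
            · cases h2
            · have hxe := readsCfg_unique M (reads_of_transA M hER htrA) hx
              injection heq with h7 h8
              subst h7; subst h8
              have e1 := congrArg (·.1) hxe
              have e2 := congrArg (·.2.1) hxe
              simp only at e1 e2
              rw [← e1, ← e2] at htr
              rw [htrA] at htr
              cases htr
        · obtain ⟨rr, hrrP, hrrC⟩ := fseq_good M aL qL hqL (βa ++ hreads.choose.2.2) pa w₂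
            (fun v hv => IH v (by simp only [List.length_cons]; omega))
          refine ⟨rr, .nt ?_, fun u => ?_⟩
          · rw [hrule]
            refine .choice_snd hE1 ?_
            cases rr with
            | some u =>
                refine bigChoice_map_succ (haL a₀) ?_
                  (fun a _ hne => .seq_fail (.term_mismatch w₂ hne))
                refine .seq_ok (.term_ok a₀ w₂) ?_
                rw [htr]; exact hrrP
            | none =>
                refine bigChoice_map_fail (fun a _ => ?_)
                by_cases hne : a = a₀
                · subst hne
                  refine .seq_ok (.term_ok a w₂) ?_
                  rw [htr]; exact hrrP
                · exact .seq_fail (.term_mismatch w₂ hne)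
          · rw [hrrC u]
            constructor
            · rintro ⟨rfl, pf, γf, hrun, hfin, hγ⟩
              have h1 : ReflTransGen M.Step (q, [Z], a₀ :: w₂)
                  (hreads.choose.1, hreads.choose.2.1 :: hreads.choose.2.2, a₀ :: w₂) :=
                er_to_run M hx.1 _
              exact ⟨rfl, pf, γf,
                (h1.tail (DPDA.Step.readA htr)).trans hrun, hfin, hγ⟩
            · rintro ⟨rfl, pf, γf, hrun, hfin, hγ⟩
              rcases run_read_split M hrun q [Z] (a₀ :: w₂) rfl with ⟨_, h2⟩ |
                ⟨s, Y, δ', a, w₂', pa', βa', heq, hER, htrA, hrest⟩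
              · cases h2
              · have hxe := readsCfg_unique M (reads_of_transA M hER htrA) hx
                injection heq with h7 h8
                subst h7; subst h8
                have e1 := congrArg (·.1) hxe
                have e2 := congrArg (·.2.1) hxe
                have e3 := congrArg (·.2.2) hxe
                simp only at e1 e2 e3
                rw [← e1, ← e2] at htr
                rw [htrA] at htr
                injection htr with htr
                injection htr with h9 h10
                subst h9; subst h10
                rw [← e3]
                exact ⟨rfl, pf, γf, hrest, hfin, hγ⟩
  · have hrule : (theG M aL qL).rule (.f q Z) = .choice
        (if BtF M q Z then eofE aL else pfail) pfail := by
      show ruleF M aL qL q Z = _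
      rw [ruleF, dif_neg hreads]
    cases w with
    | nil =>
        by_cases hbt : BtF M q Z
        · refine ⟨some [], .nt ?_, fun u => ⟨?_, ?_⟩⟩
          · rw [hrule]
            exact .choice_fst (by rw [if_pos hbt]; exact parses_eof_nil aL)
          · rintro ⟨rfl⟩
            obtain ⟨s, δ, hER, hδ, hfin⟩ := hbt
            exact ⟨rfl, s, δ, er_to_run M hER [], hfin, hδ⟩
          · rintro ⟨rfl, _⟩; rfl
        · refine ⟨none, .nt ?_, fun u => ⟨by simp, ?_⟩⟩
          · rw [hrule]
            exact .choice_snd (by rw [if_neg hbt]; exact parses_pfail []) (parses_pfail [])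
          · rintro ⟨rfl, pf, γf, hrun, hfin, hγ⟩
            rcases run_read_split M hrun q [Z] [] rfl with ⟨h1, _⟩ |
              ⟨s, Y, δ', a, w₂, pa, βa, heq, _, _, _⟩
            · exact absurd ⟨pf, γf, h1, hγ, hfin⟩ hbt
            · cases heq
    | cons a₀ w₂ =>
        have hE1 : Parses (theG M aL qL) (if BtF M q Z then eofE aL else pfail)
            (a₀ :: w₂) none := by
          split
          · exact parses_eof_cons (haL a₀) w₂
          · exact parses_pfail _
        refine ⟨none, .nt ?_, fun u => ⟨by simp, ?_⟩⟩
        · rw [hrule]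
          exact .choice_snd hE1 (parses_pfail _)
        · rintro ⟨rfl, pf, γf, hrun, hfin, hγ⟩
          rcases run_read_split M hrun q [Z] (a₀ :: w₂) rfl with ⟨_, h2⟩ |
            ⟨s, Y, δ', a, w₂', pa', βa', heq, hER, htrA, hrest⟩
          · cases h2
          · exact absurd ⟨(s, Y, δ'), reads_of_transA M hER htrA⟩ hreads

theorem main_good (haL : ∀ a, a ∈ aL) (hqL : ∀ q, q ∈ qL) (w : List A) :
    CGood M aL qL w ∧ FGood M aL qL w := by
  have key : ∀ n (w : List A), w.length < n → CGood M aL qL w ∧ FGood M aL qL w := by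
    intro n
    induction n with
    | zero => exact fun w h => absurd h (Nat.not_lt_zero _)
    | succ n ih =>
        intro w hw
        have IH : ∀ v : List A, v.length < w.length → CGood M aL qL v ∧ FGood M aL qL v :=
          fun v hv => ih v (by omega)
        exact ⟨c_step M aL qL haL hqL w IH, f_step M aL qL haL hqL w IH⟩
  exact key (w.length + 1) w (by omega)

theorem start_good (haL : ∀ a, a ∈ aL) (hqL : ∀ q, q ∈ qL) (w : List A) :
    ∃ r, Parses (theG M aL qL) (.nt .start) w r ∧ (r = some [] ↔ w ∈ M.Lang) := by
  classical
  obtain ⟨hCG, hFG⟩ := main_good M aL qL haL hqL w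
  obtain ⟨ρF, hρFP, hρFC⟩ := hFG M.init M.Z0
  have hrule : (theG M aL qL).rule .start = .choice (.nt (.f M.init M.Z0))
      (bigChoice ((qL.filter fun p => M.final p).map fun p =>
        .seq (.nt (.c M.init M.Z0 p)) (eofE aL))) := rfl
  by_cases hFs : Fspec M M.init [M.Z0] w
  · have hρF : ρF = some [] := (hρFC []).mpr ⟨rfl, hFs⟩
    rw [hρF] at hρFP
    refine ⟨some [], .nt (by rw [hrule]; exact .choice_fst hρFP), ?_⟩
    obtain ⟨pf, γf, hrun, hfin, _⟩ := hFs
    exact ⟨fun _ => show w ∈ M.Lang from ⟨pf, γf, hrun, hfin⟩, fun _ => rfl⟩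
  · have hρF : ρF = none := by
      cases ρF with
      | none => rfl
      | some u' => exact absurd ((hρFC u').mp rfl).2 hFs
    rw [hρF] at hρFP
    by_cases hpop : ∃ x : Q × List A, ReflTransGen M.Step (M.init, [M.Z0], w) (x.1, [], x.2)
    · obtain ⟨⟨p₁, v⟩, hp₁⟩ := hpop
      obtain ⟨ρ₁, hρ₁P, hρ₁C⟩ := hCG M.init M.Z0 p₁
      have hρ₁ : ρ₁ = some v := (hρ₁C v).mpr hp₁
      rw [hρ₁] at hρ₁P
      have hCother : ∀ j, j ≠ p₁ →
          Parses (theG M aL qL) (.nt (.c M.init M.Z0 j)) w none := by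
        intro j hj
        obtain ⟨ρ, hρP, hρC⟩ := hCG M.init M.Z0 j
        cases ρ with
        | none => exact hρP
        | some u' => exact absurd (pop_unique M ((hρC u').mp rfl) hp₁).1 hj
      by_cases hfin : M.final p₁ = true
      · cases v with
        | nil =>
            refine ⟨some [], .nt ?_, ?_⟩
            · rw [hrule]
              refine .choice_snd hρFP ?_
              exact bigChoice_map_succ (i := p₁)
                (List.mem_filter.2 ⟨hqL p₁, by simpa using hfin⟩)
                (.seq_ok hρ₁P (parses_eof_nil aL))
                (fun j _ hne => .seq_fail (hCother j hne))
            · exact ⟨fun _ => show w ∈ M.Lang from ⟨p₁, [], hp₁, hfin⟩, fun _ => rfl⟩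
        | cons b v' =>
            refine ⟨none, .nt ?_, ⟨by simp, fun hmem => ?_⟩⟩
            · rw [hrule]
              refine .choice_snd hρFP ?_
              refine bigChoice_map_fail (fun j _ => ?_)
              by_cases hne : j = p₁
              · subst hne; exact .seq_ok hρ₁P (parses_eof_cons (haL b) v')
              · exact .seq_fail (hCother j hne)
            · obtain ⟨pf, γf, hrun, hfin'⟩ := hmem
              cases γf with
              | nil => exact absurd (pop_unique M hrun hp₁).2 (by simp)
              | cons g γf' => exact absurd ⟨pf, g :: γf', hrun, hfin', by simp⟩ hFs
      · refine ⟨none, .nt ?_, ⟨by simp, fun hmem => ?_⟩⟩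
        · rw [hrule]
          refine .choice_snd hρFP ?_
          refine bigChoice_map_fail (fun j hj => ?_)
          have hjfin : M.final j = true := by simpa using (List.mem_filter.1 hj).2
          have hne : j ≠ p₁ := fun h => hfin (h ▸ hjfin)
          exact .seq_fail (hCother j hne)
        · obtain ⟨pf, γf, hrun, hfin'⟩ := hmem
          cases γf with
          | nil =>
              have he := (pop_unique M hrun hp₁).1
              rw [he] at hfin'
              exact absurd hfin' hfin
          | cons g γf' => exact absurd ⟨pf, g :: γf', hrun, hfin', by simp⟩ hFs
    · have hCnone : ∀ j, Parses (theG M aL qL) (.nt (.c M.init M.Z0 j)) w none := by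
        intro j
        obtain ⟨ρ, hρP, hρC⟩ := hCG M.init M.Z0 j
        cases ρ with
        | none => exact hρP
        | some u' => exact absurd ⟨(j, u'), (hρC u').mp rfl⟩ hpop
      refine ⟨none, .nt ?_, ⟨by simp, fun hmem => ?_⟩⟩
      · rw [hrule]
        exact .choice_snd hρFP (bigChoice_map_fail (fun j _ => .seq_fail (hCnone j)))
      · obtain ⟨pf, γf, hrun, hfin'⟩ := hmem
        cases γf with
        | nil => exact absurd ⟨(pf, []), hrun⟩ hpop
        | cons g γf' => exact absurd ⟨pf, g :: γf', hrun, hfin', by simp⟩ hFs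

end Build



end Aux

/-- Every deterministic context-free language is a parsing
expression language: for every DPDA `A` there is a (well-formed) PEG `G` with
`L(G) = L(A)`. -/
theorem dcfl_subset_pel {A : Type} [Finite A] (Q Γ : Type) [Finite Q] [Finite Γ]
    (M : DPDA Q A Γ) :
    ∃ (N : Type) (_ : Finite N) (G : PEG N A), G.WellFormed ∧ G.Lang = M.Lang := by
  classical
  letI := Fintype.ofFinite A
  letI := Fintype.ofFinite Q
  have haL : ∀ a : A, a ∈ (Finset.univ : Finset A).toList := fun a => by simp
  have hqL : ∀ q : Q, q ∈ (Finset.univ : Finset Q).toList := fun q => by simp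
  refine ⟨Build.PNT Q Γ, Build.instFinitePNT Q Γ,
    Build.theG M (Finset.univ : Finset A).toList (Finset.univ : Finset Q).toList,
    Build.theG_wf _ _ _, ?_⟩
  ext w
  obtain ⟨r, hP, hiff⟩ := Build.start_good M _ _ haL hqL w
  constructor
  · intro hw
    have hd := PEGAux.parses_det hw hP
    exact hiff.mp hd.symm
  · intro hw
    have hr : r = some [] := hiff.mpr hw
    rw [hr] at hP
    exact hP
end

section
/- If X is a deterministic context-free language and Y is a parsing expression language, then the concatenation XY = {xy | x ∈ X, y ∈ Y} is a parsing expression language. -/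
/-- Concatenation of languages: `XY = {xy | x ∈ X, y ∈ Y}`. -/
def concatL {A : Type} (X Y : Set (List A)) : Set (List A) :=
  {w | ∃ x ∈ X, ∃ y ∈ Y, w = x ++ y}

/-!
A PEG for `XY` simulates a DPDA `M` for `X` and, whenever `M` is in a final state, tests the
remaining input against the grammar for `Y`. The nonterminal `(p, Z, ρ)` simulates `M` from state
`p` during the lifetime of the stack symbol `Z`: in mode `ρ = some q` it consumes exactly the
input read until `Z` is popped, provided this happens in state `q`; in mode `ρ = none` it consumes
everything iff a final state is reached during that lifetime with the remaining input in `Y`.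
Since `M` is deterministic, these results are functions of the input, so a PEG can compute them:
the lifetime of a stack `Z :: δ` is that of `Z` followed by that of `δ`, and the popping state is
found by a prioritized choice over all states, of which at most one succeeds.

Left recursion is avoided because the ε-moves from `(p, [Z])` do not read the input: whether they
pop `Z`, stop at a reading configuration or run forever, and whether they pass a final state, is
decided once and compiled into the rule. Every other call of a simulating nonterminal therefore
happens after a symbol has been consumed, and the grammar for `Y` never calls back.
-/

/-! ### Evaluating parsing expressions -/

namespace Parses

variable {N A : Type} {G : PEG N A}

theorem det {e : PExp N A} {w : List A} {r₁ r₂ : Option (List A)}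
    (h₁ : Parses G e w r₁) (h₂ : Parses G e w r₂) : r₁ = r₂ := by
  induction h₁ generalizing r₂ with
  | eps => cases h₂; rfl
  | term_ok => cases h₂ with
    | term_ok => rfl
    | term_mismatch _ h => exact absurd rfl h
  | term_mismatch _ h => cases h₂ with
    | term_ok => exact absurd rfl h
    | term_mismatch => rfl
  | term_nil => cases h₂; rfl
  | nt _ ih => cases h₂ with | nt h => exact ih h
  | seq_ok _ _ ih₁ ih₂ => cases h₂ with
    | seq_ok g₁ g₂ => cases ih₁ g₁; exact ih₂ g₂
    | seq_fail g => cases ih₁ g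
  | seq_fail _ ih => cases h₂ with
    | seq_ok g => cases ih g
    | seq_fail => rfl
  | choice_fst _ ih => cases h₂ with
    | choice_fst g => exact ih g
    | choice_snd g => cases ih g
  | choice_snd _ _ ih₁ ih₂ => cases h₂ with
    | choice_fst g => cases ih₁ g
    | choice_snd _ g => exact ih₂ g
  | not_succ _ ih => cases h₂ with
    | not_succ => rfl
    | not_fail g => cases ih g
  | not_fail _ ih => cases h₂ with
    | not_succ g => cases ih g
    | not_fail => rfl

theorem isSuffix {e : PExp N A} {w : List A} {r : Option (List A)} (h : Parses G e w r) :
    ∀ v ∈ r, v <:+ w := by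
  induction h with
  | term_ok a s => rintro v ⟨⟩; exact List.suffix_cons a s
  | nt _ ih | choice_fst _ ih => exact ih
  | choice_snd _ _ _ ih => exact ih
  | seq_ok _ _ ih₁ ih₂ => exact fun v hv => (ih₂ v hv).trans (ih₁ _ rfl)
  | eps | not_succ => rintro v ⟨⟩; exact List.suffix_rfl
  | _ => rintro v ⟨⟩

theorem maybeEmpty_of_self {e : PExp N A} {w : List A} {r : Option (List A)}
    (h : Parses G e w r) (hr : r = some w) : e.maybeEmpty = true := by
  induction h with
  | seq_ok h₁ h₂ ih₁ ih₂ =>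
    cases hr
    obtain rfl := (h₂.isSuffix _ rfl).eq_of_length
      (le_antisymm (h₂.isSuffix _ rfl).length_le (h₁.isSuffix _ rfl).length_le)
    simp [PExp.maybeEmpty, ih₁ rfl, ih₂ rfl]
  | choice_fst _ ih => simp [PExp.maybeEmpty, ih hr]
  | choice_snd _ _ _ ih => simp [PExp.maybeEmpty, ih hr]
  | eps | nt | not_succ => rfl
  | _ => cases hr

end Parses

namespace PEG

variable {N A : Type} {G : PEG N A}

def LeftCalls (G : PEG N A) (C B : N) : Prop := C ∈ (G.rule B).leftNts

theorem WellFormed.wellFounded_leftCalls [Finite N] (hG : G.WellFormed) :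
    WellFounded G.LeftCalls := by
  have : IsTrans N (Relation.TransGen G.LeftCalls) := ⟨fun _ _ _ => Relation.TransGen.trans⟩
  have : Std.Irrefl (Relation.TransGen G.LeftCalls) :=
    ⟨fun B hB => hG B (Relation.transGen_swap.mpr hB)⟩
  exact Subrelation.wf Relation.TransGen.single (Finite.wellFounded_of_trans_of_irrefl _)

theorem exists_parses_of_shorter {w : List A}
    (hshort : ∀ v : List A, v.length < w.length → ∀ e : PExp N A, ∃ r, Parses G e v r)
    (e : PExp N A) (hnt : ∀ C ∈ e.leftNts, ∃ r, Parses G (.nt C) w r) :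
    ∃ r, Parses G e w r := by
  induction e with
  | eps => exact ⟨_, .eps w⟩
  | term a =>
    match w with
    | [] => exact ⟨_, .term_nil a⟩
    | b :: s =>
      by_cases hab : a = b
      · subst hab; exact ⟨_, .term_ok a s⟩
      · exact ⟨_, .term_mismatch s hab⟩
  | nt C => exact hnt C rfl
  | seq e₁ e₂ ih₁ ih₂ =>
    obtain ⟨r₁, h₁⟩ := ih₁ fun C hC => hnt C (Or.inl hC)
    match r₁, h₁ with
    | none, h₁ => exact ⟨_, .seq_fail h₁⟩
    | some w', h₁ =>
      rcases (h₁.isSuffix _ rfl).length_le.lt_or_eq with hlt | heq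
      · obtain ⟨r₂, h₂⟩ := hshort w' hlt e₂
        exact ⟨r₂, .seq_ok h₁ h₂⟩
      · obtain rfl := (h₁.isSuffix _ rfl).eq_of_length heq
        have hme := h₁.maybeEmpty_of_self rfl
        obtain ⟨r₂, h₂⟩ := ih₂ fun C hC => hnt C (Or.inr (by simpa [hme] using hC))
        exact ⟨r₂, .seq_ok h₁ h₂⟩
  | choice e₁ e₂ ih₁ ih₂ =>
    obtain ⟨r₁, h₁⟩ := ih₁ fun C hC => hnt C (Or.inl hC)
    match r₁, h₁ with
    | some w', h₁ => exact ⟨_, .choice_fst h₁⟩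
    | none, h₁ =>
      obtain ⟨r₂, h₂⟩ := ih₂ fun C hC => hnt C (Or.inr hC)
      exact ⟨r₂, .choice_snd h₁ h₂⟩
  | not e ih =>
    obtain ⟨r, h⟩ := ih hnt
    match r, h with
    | none, h => exact ⟨_, .not_succ h⟩
    | some _, h => exact ⟨_, .not_fail h⟩

theorem WellFormed.exists_parses [Finite N] (hG : G.WellFormed) (w : List A) :
    ∀ e : PExp N A, ∃ r, Parses G e w r := by
  have hshort : ∀ v : List A, v.length < w.length → ∀ e : PExp N A, ∃ r, Parses G e v r :=
    fun v _ => hG.exists_parses v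
  have hnt (B : N) : ∃ r, Parses G (.nt B) w r :=
    hG.wellFounded_leftCalls.induction B fun B ih =>
      (exists_parses_of_shorter hshort _ ih).imp fun _ => .nt
  exact fun e => exists_parses_of_shorter hshort e fun C _ => hnt C
termination_by w.length

end PEG

namespace PExp

variable {N A : Type}

def fail : PExp N A := .not .eps

def firstOf (l : List (PExp N A)) : PExp N A := l.foldr .choice fail

noncomputable def choiceAll {ι : Type} [Fintype ι] (f : ι → PExp N A) : PExp N A :=
  firstOf (Finset.univ.toList.map f)

noncomputable def dispatch [Fintype A] (f : A → PExp N A) : PExp N A :=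
  choiceAll fun a => .seq (.term a) (f a)

noncomputable def atEnd [Fintype A] : PExp N A := .not (dispatch fun _ => .eps)

def mapN {N' : Type} (φ : N → N') : PExp N A → PExp N' A
  | .eps => .eps
  | .term a => .term a
  | .nt B => .nt (φ B)
  | .seq e₁ e₂ => .seq (e₁.mapN φ) (e₂.mapN φ)
  | .choice e₁ e₂ => .choice (e₁.mapN φ) (e₂.mapN φ)
  | .not e => .not (e.mapN φ)

@[simp]
theorem maybeEmpty_mapN {N' : Type} (φ : N → N') (e : PExp N A) :
    (e.mapN φ).maybeEmpty = e.maybeEmpty := by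
  induction e <;> simp [mapN, maybeEmpty, *]

theorem leftNts_mapN {N' : Type} (φ : N → N') (e : PExp N A) :
    (e.mapN φ).leftNts = φ '' e.leftNts := by
  induction e with
  | seq e₁ e₂ ih₁ ih₂ =>
    simp only [mapN, leftNts, ih₁, ih₂, maybeEmpty_mapN]
    split <;> simp [Set.image_union]
  | choice e₁ e₂ ih₁ ih₂ => simp [mapN, leftNts, ih₁, ih₂, Set.image_union]
  | not e ih => simpa [mapN, leftNts] using ih
  | _ => simp [mapN, leftNts]

@[simp]
theorem leftNts_fail : (fail : PExp N A).leftNts = ∅ := rfl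

theorem leftNts_firstOf (l : List (PExp N A)) : (firstOf l).leftNts = ⋃ e ∈ l, e.leftNts := by
  induction l with
  | nil => simp [firstOf]
  | cons e l ih => simp [firstOf, leftNts, ← ih]

@[simp]
theorem leftNts_dispatch [Fintype A] (f : A → PExp N A) : (dispatch f).leftNts = ∅ := by
  simp [dispatch, choiceAll, leftNts_firstOf, leftNts, maybeEmpty]

@[simp]
theorem leftNts_atEnd [Fintype A] : (atEnd : PExp N A).leftNts = ∅ :=
  leftNts_dispatch _

end PExp

theorem PEG.WellFormed.of_sum {N N' A : Type} {G : PEG N A} {G' : PEG (N ⊕ N') A}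
    (hG : G.WellFormed) (hl : ∀ B, G'.rule (.inl B) = (G.rule B).mapN .inl)
    (hr : ∀ B, (G'.rule (.inr B)).leftNts ⊆ Set.range .inl) : G'.WellFormed := by
  have hedge {X Y : N ⊕ N'} (h : Y ∈ (G'.rule X).leftNts) :
      ∃ m, Y = .inl m ∧ ∀ n, X = .inl n → m ∈ (G.rule n).leftNts := by
    cases X with
    | inl n =>
      rw [hl, PExp.leftNts_mapN] at h
      obtain ⟨m, hm, rfl⟩ := h
      exact ⟨m, rfl, fun n' hn => Sum.inl_injective hn ▸ hm⟩
    | inr x =>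
      obtain ⟨m, rfl⟩ := hr x h
      exact ⟨m, rfl, fun _ h => Sum.inl_ne_inr h.symm |>.elim⟩
  have hpath {X Y : N ⊕ N'} (h : Relation.TransGen (fun X Y => Y ∈ (G'.rule X).leftNts) X Y) :
      ∃ m, Y = .inl m ∧ ∀ n, X = .inl n →
        Relation.TransGen (fun X Y => Y ∈ (G.rule X).leftNts) n m := by
    induction h with
    | single h =>
      obtain ⟨m, rfl, hm⟩ := hedge h
      exact ⟨m, rfl, fun n hn => .single (hm n hn)⟩
    | tail _ h ih =>
      obtain ⟨m, rfl, hm⟩ := ih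
      obtain ⟨m', rfl, hm'⟩ := hedge h
      exact ⟨m', rfl, fun n hn => (hm n hn).tail (hm' m rfl)⟩
  intro B hB
  obtain ⟨m, rfl, hm⟩ := hpath hB
  exact hG m (hm m rfl)

namespace Parses

variable {N A : Type} {G : PEG N A} {e e₁ e₂ : PExp N A} {w : List A} {r : Option (List A)}

theorem fail (w : List A) : Parses G .fail w none := .not_fail (.eps w)

theorem choice_or {r₁ r₂ : Option (List A)} (h₁ : Parses G e₁ w r₁)
    (h₂ : Parses G e₂ w r₂) :
    Parses G (.choice e₁ e₂) w (r₁.or r₂) := by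
  cases r₁ with
  | none => exact .choice_snd h₁ h₂
  | some _ => exact .choice_fst h₁

theorem firstOf_none {l : List (PExp N A)} (h : ∀ e ∈ l, Parses G e w none) :
    Parses G (.firstOf l) w none := by
  induction l with
  | nil => exact .fail w
  | cons e l ih => exact .choice_snd (h e (by simp)) (ih fun e' he' => h e' (by simp [he']))

theorem firstOf_of_mem {l : List (PExp N A)} (he : e ∈ l) (h : Parses G e w r)
    (hl : ∀ e' ∈ l, e' ≠ e → Parses G e' w none) : Parses G (.firstOf l) w r := by
  cases r with
  | none =>
    refine firstOf_none fun e' he' => ?_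
    by_cases h' : e' = e
    · exact h' ▸ h
    · exact hl e' he' h'
  | some v =>
    induction l with
    | nil => cases he
    | cons e' l ih =>
      by_cases h' : e' = e
      · subst h'; exact .choice_fst h
      · exact .choice_snd (hl e' (by simp) h')
          (ih ((List.mem_cons.mp he).resolve_left (Ne.symm h'))
            fun e'' he'' => hl e'' (by simp [he'']))

theorem choiceAll_none {ι : Type} [Fintype ι] {f : ι → PExp N A}
    (h : ∀ i, Parses G (f i) w none) : Parses G (.choiceAll f) w none :=
  firstOf_none (by simpa using h)

theorem choiceAll {ι : Type} [Fintype ι] {f : ι → PExp N A} {i : ι} (h : Parses G (f i) w r)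
    (hj : ∀ j ≠ i, Parses G (f j) w none) : Parses G (.choiceAll f) w r :=
  firstOf_of_mem (by simp) h (by simpa using fun j hji => hj j (fun h => hji (h ▸ rfl)))

theorem dispatch_nil [Fintype A] (f : A → PExp N A) : Parses G (.dispatch f) [] none :=
  choiceAll_none fun a => .seq_fail (.term_nil a)

theorem dispatch_cons [Fintype A] {f : A → PExp N A} {a : A} {u : List A}
    (h : Parses G (f a) u r) : Parses G (.dispatch f) (a :: u) r :=
  choiceAll (.seq_ok (.term_ok a u) h) fun _ hb => .seq_fail (.term_mismatch u hb)

theorem atEnd_nil [Fintype A] : Parses G .atEnd [] (some []) := .not_succ (dispatch_nil _)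

theorem atEnd_cons [Fintype A] (a : A) (u : List A) : Parses G .atEnd (a :: u) none :=
  .not_fail (dispatch_cons (.eps u))

theorem mapN {N' : Type} {G' : PEG N' A} {φ : N → N'}
    (hrule : ∀ B, G'.rule (φ B) = (G.rule B).mapN φ) (h : Parses G e w r) :
    Parses G' (e.mapN φ) w r := by
  induction h with
  | nt _ ih => exact .nt (hrule _ ▸ ih)
  | eps w => exact .eps w
  | term_ok a s => exact .term_ok a s
  | term_mismatch s h => exact .term_mismatch s h
  | term_nil a => exact .term_nil a
  | seq_ok _ _ ih₁ ih₂ => exact .seq_ok ih₁ ih₂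
  | seq_fail _ ih => exact .seq_fail ih
  | choice_fst _ ih => exact .choice_fst ih
  | choice_snd _ _ ih₁ ih₂ => exact .choice_snd ih₁ ih₂
  | not_succ _ ih => exact .not_succ ih
  | not_fail _ ih => exact .not_fail ih

end Parses

/-! ### Runs of a DPDA -/

namespace Relation.ReflTransGen

variable {α : Type} {r : α → α → Prop} {a b c : α}

theorem eq_of_normal (h : ReflTransGen r a b) (ha : ∀ x, ¬ r a x) : a = b :=
  h.cases_head.resolve_right fun ⟨x, hx, _⟩ => ha x hx

theorem to_normal_of_rightUnique (hr : Relator.RightUnique r) (hab : ReflTransGen r a b)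
    (hb : ∀ x, ¬ r b x) (hac : ReflTransGen r a c) : ReflTransGen r c b :=
  (total_of_right_unique hr hab hac).elim (fun hbc => eq_of_normal hbc hb ▸ .refl) id

theorem eq_of_rightUnique_of_normal (hr : Relator.RightUnique r) (hab : ReflTransGen r a b)
    (hac : ReflTransGen r a c) (hb : ∀ x, ¬ r b x) (hc : ∀ x, ¬ r c x) : b = c :=
  (eq_of_normal (to_normal_of_rightUnique hr hab hb hac) hc).symm

end Relation.ReflTransGen

namespace DPDA

open Relation

variable {Q A Γ : Type} {M : DPDA Q A Γ}

theorem transE_eq_none_of_transA_eq_some {q : Q} {a : A} {Z : Γ} {x : Q × List Γ}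
    (h : M.transA q a Z = some x) : M.transE q Z = none := by
  by_contra hE
  simp [M.det q Z hE a] at h

variable (M) in
theorem step_rightUnique : Relator.RightUnique M.Step := by
  intro c d₁ d₂ h₁ h₂
  cases h₁ with
  | readA h =>
    cases h₂ with
    | readA h' => rw [h] at h'; cases h'; rfl
    | readE h' => simp [transE_eq_none_of_transA_eq_some h] at h'
  | readE h =>
    cases h₂ with
    | readA h' => simp [transE_eq_none_of_transA_eq_some h'] at h
    | readE h' => rw [h] at h'; cases h'; rfl

theorem not_step_nil {q : Q} {w : List A} {d : Q × List Γ × List A} :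
    ¬ M.Step (q, [], w) d := nofun

theorem reach_append_stack {c d : Q × List Γ × List A} (h : ReflTransGen M.Step c d)
    (τ : List Γ) : ReflTransGen M.Step (c.1, c.2.1 ++ τ, c.2.2) (d.1, d.2.1 ++ τ, d.2.2) :=
  h.lift (fun c => (c.1, c.2.1 ++ τ, c.2.2)) fun _ _ hs => by
    cases hs with
    | readA h => simpa [Function.onFun] using Step.readA (γ := _ ++ τ) h
    | readE h => simpa [Function.onFun] using Step.readE (γ := _ ++ τ) h

theorem reach_append_input {c d : Q × List Γ × List A} (h : ReflTransGen M.Step c d)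
    (v : List A) : ReflTransGen M.Step (c.1, c.2.1, c.2.2 ++ v) (d.1, d.2.1, d.2.2 ++ v) :=
  h.lift (fun c => (c.1, c.2.1, c.2.2 ++ v)) fun _ _ hs => by
    cases hs with
    | readA h => exact .readA h
    | readE h => exact .readE h

theorem Step.of_append_input {c d : Q × List Γ × List A} (h : M.Step c d) {u' v : List A}
    (hd : d.2.2 = u' ++ v) : ∃ u, c.2.2 = u ++ v ∧ M.Step (c.1, c.2.1, u) (d.1, d.2.1, u') := by
  cases h with
  | readA h => exact ⟨_ :: u', by simp [← hd], .readA h⟩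
  | readE h => exact ⟨u', hd, .readE h⟩

theorem reach_of_append_input {c d : Q × List Γ × List A} (h : ReflTransGen M.Step c d)
    {u' v : List A} (hd : d.2.2 = u' ++ v) :
    ∃ u, c.2.2 = u ++ v ∧ ReflTransGen M.Step (c.1, c.2.1, u) (d.1, d.2.1, u') := by
  induction h generalizing u' with
  | refl => exact ⟨u', hd, .refl⟩
  | tail _ hs ih =>
    obtain ⟨t, ht, hs'⟩ := hs.of_append_input hd
    obtain ⟨u, hu, hr⟩ := ih ht
    exact ⟨u, hu, hr.tail hs'⟩

theorem isSuffix_of_reach {c d : Q × List Γ × List A} (h : ReflTransGen M.Step c d) :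
    d.2.2 <:+ c.2.2 :=
  let ⟨u, hu, _⟩ := reach_of_append_input h (u' := []) rfl
  ⟨u, hu.symm⟩

theorem Step.of_append_stack {p : Q} {Z : Γ} {σ τ : List Γ} {u : List A}
    {c : Q × List Γ × List A} (h : M.Step (p, Z :: σ ++ τ, u) c) :
    ∃ d, M.Step (p, Z :: σ, u) d ∧ c = (d.1, d.2.1 ++ τ, d.2.2) := by
  cases h with
  | readA h => exact ⟨_, .readA h, by simp⟩
  | readE h => exact ⟨_, .readE h, by simp⟩

theorem reach_split_stack {p : Q} {σ τ : List Γ} {u : List A} {e : Q × List Γ × List A}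
    (h : ReflTransGen M.Step (p, σ ++ τ, u) e) :
    (∃ q σ' v, e = (q, σ' ++ τ, v) ∧ ReflTransGen M.Step (p, σ, u) (q, σ', v)) ∨
      ∃ s v, ReflTransGen M.Step (p, σ, u) (s, [], v) ∧ ReflTransGen M.Step (s, τ, v) e := by
  generalize hc : (p, σ ++ τ, u) = c at h
  induction h using ReflTransGen.head_induction_on generalizing p σ u with
  | refl => exact .inl ⟨p, σ, u, hc.symm, .refl⟩
  | head hs hr ih =>
    subst hc
    match σ, hs with
    | [], hs => exact .inr ⟨p, u, .refl, .head hs hr⟩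
    | Z :: σ, hs =>
      obtain ⟨d, hd, rfl⟩ := hs.of_append_stack
      rcases ih rfl with ⟨q, σ', v, rfl, hr'⟩ | ⟨s, v, h₁, h₂⟩
      · exact .inl ⟨q, σ', v, rfl, .head hd hr'⟩
      · exact .inr ⟨s, v, .head hd h₁, h₂⟩

variable (M) in
def epsStep : Q × List Γ → Option (Q × List Γ)
  | (_, []) => none
  | (q, Z :: γ) => (M.transE q Z).map fun x => (x.1, x.2 ++ γ)

variable (M) in
def EpsReach : Q × List Γ → Q × List Γ → Prop :=
  ReflTransGen fun c d => M.epsStep c = some d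

theorem epsStep_rightUnique : Relator.RightUnique fun c d : Q × List Γ => M.epsStep c = some d :=
  fun _ _ _ h₁ h₂ => Option.some_injective _ (h₁.symm.trans h₂)

theorem EpsReach.reach {c d : Q × List Γ} (h : M.EpsReach c d) (w : List A) :
    ReflTransGen M.Step (c.1, c.2, w) (d.1, d.2, w) :=
  h.lift (fun c => (c.1, c.2, w)) fun c d hs => by
    obtain ⟨q, _ | ⟨Z, γ⟩⟩ := c
    · cases hs
    · obtain ⟨x, hx, rfl⟩ := Option.map_eq_some_iff.mp hs
      exact .readE hx

variable (M) in
noncomputable def epsLimit (c : Q × List Γ) : Option (Q × List Γ) :=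
  open Classical in
  if h : ∃ d, M.EpsReach c d ∧ M.epsStep d = none then some h.choose else none

theorem epsLimit_eq_some_iff {c d : Q × List Γ} :
    M.epsLimit c = some d ↔ M.EpsReach c d ∧ M.epsStep d = none := by
  have hnormal {d} (hd : M.epsStep d = none) : ∀ x, M.epsStep d ≠ some x := by simp [hd]
  constructor
  · intro h
    unfold epsLimit at h
    split_ifs at h with hex
    cases h
    exact hex.choose_spec
  · intro hd
    have hex : ∃ d, M.EpsReach c d ∧ M.epsStep d = none := ⟨d, hd⟩
    rw [epsLimit, dif_pos hex]
    exact congrArg some (ReflTransGen.eq_of_rightUnique_of_normal epsStep_rightUnique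
      hex.choose_spec.1 hd.1 (hnormal hex.choose_spec.2) (hnormal hd.2))

theorem epsLimit_eq_of_epsStep {c c' : Q × List Γ} (h : M.epsStep c = some c') :
    M.epsLimit c = M.epsLimit c' := by
  refine Option.ext fun d => ?_
  simp only [epsLimit_eq_some_iff]
  refine ⟨fun ⟨hr, hd⟩ => ⟨?_, hd⟩, fun ⟨hr, hd⟩ => ⟨.head h hr, hd⟩⟩
  exact ReflTransGen.to_normal_of_rightUnique epsStep_rightUnique hr (by simp [hd]) (.single h)

variable (M) in
/-- The ε-moves up to their limit followed by one reading move. Reaching an empty stack also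
counts as a macro step, so that popping is visible in the result. -/
noncomputable def macroStep : Q × List Γ × List A → Option (Q × List Γ × List A)
  | (p, γ, w) =>
    match M.epsLimit (p, γ), w with
    | some (r, []), w => some (r, [], w)
    | some (q, Z :: δ), a :: u => (M.transA q a Z).map fun x => (x.1, x.2 ++ δ, u)
    | _, _ => none

theorem macroStep_eq_of_epsStep {p p' : Q} {γ γ' : List Γ} (w : List A)
    (h : M.epsStep (p, γ) = some (p', γ')) :
    M.macroStep (p, γ, w) = M.macroStep (p', γ', w) := by
  simp only [macroStep, epsLimit_eq_of_epsStep h]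

theorem reach_of_macroStep {c c' : Q × List Γ × List A} (h : M.macroStep c = some c') :
    ReflTransGen M.Step c c' := by
  obtain ⟨p, γ, w⟩ := c
  match hlim : M.epsLimit (p, γ), w with
  | some (r, []), w =>
    simp only [macroStep, hlim, Option.some.injEq] at h
    exact h ▸ (epsLimit_eq_some_iff.mp hlim).1.reach w
  | some (q, Z :: δ), a :: u =>
    simp only [macroStep, hlim, Option.map_eq_some_iff] at h
    obtain ⟨x, hx, rfl⟩ := h
    exact ((epsLimit_eq_some_iff.mp hlim).1.reach (a :: u)).tail (.readA hx)
  | some (q, Z :: δ), [] => simp [macroStep, hlim] at h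
  | none, w => simp [macroStep, hlim] at h

theorem reach_iff_macroStep {p : Q} {γ : List Γ} {w : List A} {e : Q × List Γ × List A} :
    ReflTransGen M.Step (p, γ, w) e ↔
      (∃ d, M.EpsReach (p, γ) d ∧ e = (d.1, d.2, w)) ∨
        ∃ c', M.macroStep (p, γ, w) = some c' ∧ ReflTransGen M.Step c' e := by
  refine ⟨fun h => ?_, ?_⟩
  · generalize hc : (p, γ, w) = c at h
    induction h using ReflTransGen.head_induction_on generalizing p γ w with
    | refl => exact .inl ⟨(p, γ), .refl, hc.symm⟩
    | head hs hr ih =>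
      subst hc
      cases hs with
      | @readE _ Z γ _ p' β h =>
        have hε : M.epsStep (p, Z :: γ) = some (p', β ++ γ) := by simp [epsStep, h]
        rcases ih rfl with ⟨d, hd, rfl⟩ | ⟨c', hc', hr'⟩
        · exact .inl ⟨d, .head hε hd, rfl⟩
        · exact .inr ⟨c', (macroStep_eq_of_epsStep w hε).trans hc', hr'⟩
      | @readA _ a Z γ u p' β h =>
        have hlim : M.epsLimit (p, Z :: γ) = some (p, Z :: γ) :=
          epsLimit_eq_some_iff.mpr
            ⟨.refl, by simp [epsStep, transE_eq_none_of_transA_eq_some h]⟩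
        exact .inr ⟨_, by simp [macroStep, hlim, h], hr⟩
  · rintro (⟨d, hd, rfl⟩ | ⟨c', hc', hr⟩)
    · exact hd.reach w
    · exact (reach_of_macroStep hc').trans hr

theorem eq_of_reach_nil {q : Q} {w : List A} {e : Q × List Γ × List A}
    (h : ReflTransGen M.Step (q, [], w) e) : e = (q, [], w) :=
  (h.eq_of_normal fun _ => not_step_nil).symm

variable (M) in
noncomputable def popResult (c : Q × List Γ × List A) : Option (Q × List A) :=
  open Classical in
  if h : ∃ x : Q × List A, ReflTransGen M.Step c (x.1, [], x.2) then some h.choose else none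

theorem popResult_eq_some_iff {c : Q × List Γ × List A} {x : Q × List A} :
    M.popResult c = some x ↔ ReflTransGen M.Step c (x.1, [], x.2) := by
  constructor
  · intro h
    unfold popResult at h
    split_ifs at h with hex
    cases h
    exact hex.choose_spec
  · intro hx
    have hex : ∃ x : Q × List A, ReflTransGen M.Step c (x.1, [], x.2) := ⟨x, hx⟩
    rw [popResult, dif_pos hex]
    have := ReflTransGen.eq_of_rightUnique_of_normal M.step_rightUnique hex.choose_spec hx
      (fun _ => not_step_nil) (fun _ => not_step_nil)
    simp only [Prod.mk.injEq] at this
    exact congrArg some (Prod.ext this.1 this.2.2)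

theorem popResult_eq_of_reach {c c' : Q × List Γ × List A} (h : ReflTransGen M.Step c c') :
    M.popResult c = M.popResult c' :=
  Option.ext fun _ => by
    simp only [popResult_eq_some_iff]
    exact ⟨fun hx => .to_normal_of_rightUnique M.step_rightUnique hx (fun _ => not_step_nil) h,
      h.trans⟩

theorem popResult_nil (q : Q) (w : List A) : M.popResult (q, [], w) = some (q, w) :=
  popResult_eq_some_iff.mpr .refl

theorem popResult_eq_macroStep (p : Q) (γ : List Γ) (w : List A) :
    M.popResult (p, γ, w) = (M.macroStep (p, γ, w)).bind M.popResult := by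
  cases hm : M.macroStep (p, γ, w) with
  | some c' => exact popResult_eq_of_reach (reach_of_macroStep hm)
  | none =>
    refine Option.eq_none_iff_forall_ne_some.mpr fun x hx => ?_
    rcases reach_iff_macroStep.mp (popResult_eq_some_iff.mp hx) with
      ⟨d, hd, hde⟩ | ⟨c', hc', -⟩
    · obtain rfl : d = (x.1, []) := by simp only [Prod.mk.injEq] at hde; ext <;> simp [hde]
      have hlim : M.epsLimit (p, γ) = some (x.1, []) := epsLimit_eq_some_iff.mpr ⟨hd, rfl⟩
      simp [macroStep, hlim] at hm
    · simp [hm] at hc'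

theorem popResult_cons (p : Q) (Z : Γ) (δ : List Γ) (u : List A) :
    M.popResult (p, Z :: δ, u) =
      (M.popResult (p, [Z], u)).bind fun x => M.popResult (x.1, δ, x.2) := by
  cases h : M.popResult (p, [Z], u) with
  | some x => simpa using popResult_eq_of_reach (reach_append_stack (popResult_eq_some_iff.mp h) δ)
  | none =>
    refine Option.eq_none_iff_forall_ne_some.mpr fun y hy => ?_
    have hy' : ReflTransGen M.Step (p, [Z] ++ δ, u) (y.1, [], y.2) := popResult_eq_some_iff.mp hy
    rcases reach_split_stack hy' with ⟨q, σ', v, he, hr⟩ | ⟨s, v, hr, -⟩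
    · simp only [Prod.mk.injEq, List.nil_eq_append_iff] at he
      obtain ⟨rfl, ⟨rfl, -⟩, rfl⟩ := he
      simp [popResult_eq_some_iff.mpr hr] at h
    · simp [(popResult_eq_some_iff (x := (s, v))).mpr hr] at h

variable (M) in
def ReachesFinal (Y : Set (List A)) (c : Q × List Γ × List A) : Prop :=
  ∃ f γ v, ReflTransGen M.Step c (f, γ, v) ∧ M.final f = true ∧ v ∈ Y

variable (M) in
def EpsReachesFinal (c : Q × List Γ) : Prop := ∃ d, M.EpsReach c d ∧ M.final d.1 = true

variable {Y : Set (List A)}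

theorem ReachesFinal.of_reach {c c' : Q × List Γ × List A} (h : ReflTransGen M.Step c c') :
    M.ReachesFinal Y c' → M.ReachesFinal Y c
  | ⟨f, γ, v, hr, hf, hv⟩ => ⟨f, γ, v, h.trans hr, hf, hv⟩

theorem reachesFinal_nil_iff {q : Q} {w : List A} :
    M.ReachesFinal Y (q, [], w) ↔ M.final q = true ∧ w ∈ Y := by
  constructor
  · rintro ⟨f, γ, v, hr, hf, hv⟩
    cases eq_of_reach_nil hr
    exact ⟨hf, hv⟩
  · exact fun ⟨hf, hw⟩ => ⟨q, [], w, .refl, hf, hw⟩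

theorem reachesFinal_iff_macroStep {p : Q} {γ : List Γ} {w : List A} :
    M.ReachesFinal Y (p, γ, w) ↔
      (M.EpsReachesFinal (p, γ) ∧ w ∈ Y) ∨
        ∃ c', M.macroStep (p, γ, w) = some c' ∧ M.ReachesFinal Y c' := by
  constructor
  · rintro ⟨f, σ, v, hr, hf, hv⟩
    rcases reach_iff_macroStep.mp hr with ⟨d, hd, he⟩ | ⟨c', hc', hr'⟩
    · simp only [Prod.mk.injEq] at he
      obtain ⟨rfl, -, rfl⟩ := he
      exact .inl ⟨⟨d, hd, hf⟩, hv⟩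
    · exact .inr ⟨c', hc', f, σ, v, hr', hf, hv⟩
  · rintro (⟨⟨d, hd, hf⟩, hw⟩ | ⟨c', hc', hc'F⟩)
    · exact ⟨d.1, d.2, w, hd.reach w, hf, hw⟩
    · exact hc'F.of_reach (reach_of_macroStep hc')

theorem reachesFinal_cons_iff {p : Q} {Z : Γ} {δ : List Γ} {u : List A} :
    M.ReachesFinal Y (p, Z :: δ, u) ↔
      M.ReachesFinal Y (p, [Z], u) ∨
        ∃ x, M.popResult (p, [Z], u) = some x ∧ M.ReachesFinal Y (x.1, δ, x.2) := by
  constructor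
  · rintro ⟨f, σ, v, hr, hf, hv⟩
    rcases reach_split_stack (σ := [Z]) hr with ⟨q, σ', v', he, hr'⟩ | ⟨s, v', h₁, h₂⟩
    · simp only [Prod.mk.injEq] at he
      obtain ⟨rfl, -, rfl⟩ := he
      exact .inl ⟨f, σ', v, hr', hf, hv⟩
    · exact .inr ⟨(s, v'), popResult_eq_some_iff.mpr h₁, f, σ, v, h₂, hf, hv⟩
  · rintro (⟨f, σ, v, hr, hf, hv⟩ | ⟨x, hx, hxF⟩)
    · exact ⟨f, σ ++ δ, v, reach_append_stack hr δ, hf, hv⟩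
    · exact hxF.of_reach (reach_append_stack (popResult_eq_some_iff.mp hx) δ)

theorem mem_concatL_iff_reachesFinal (Y : Set (List A)) (w : List A) :
    w ∈ concatL M.Lang Y ↔ M.ReachesFinal Y (M.init, [M.Z0], w) := by
  constructor
  · rintro ⟨x, ⟨p, γ, hr, hf⟩, y, hy, rfl⟩
    exact ⟨p, γ, y, by simpa using reach_append_input hr y, hf, hy⟩
  · rintro ⟨f, γ, v, hr, hf, hv⟩
    obtain ⟨u, hu, hr'⟩ := reach_of_append_input hr (u' := []) rfl
    exact ⟨u, ⟨f, γ, hr', hf⟩, v, hv, hu⟩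

section Outcome

open scoped Classical

variable (M) in
noncomputable def outcome (Y : Set (List A)) :
    Option Q → Q × List Γ × List A → Option (List A)
  | none, c => if M.ReachesFinal Y c then some [] else none
  | some q, c => (M.popResult c).bind fun x => if x.1 = q then some x.2 else none

theorem outcome_nil (ρ : Option Q) (p : Q) (w : List A) :
    M.outcome Y ρ (p, [], w) =
      ρ.elim (if M.final p = true ∧ w ∈ Y then some [] else none)
        fun q => if p = q then some w else none := by
  cases ρ <;> simp [outcome, reachesFinal_nil_iff, popResult_nil]

theorem outcome_eq_macroStep (ρ : Option Q) (p : Q) (γ : List Γ) (w : List A) :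
    M.outcome Y ρ (p, γ, w) =
      (ρ.elim (if M.EpsReachesFinal (p, γ) ∧ w ∈ Y then some [] else none) fun _ => none).or
        ((M.macroStep (p, γ, w)).bind (M.outcome Y ρ)) := by
  cases ρ with
  | none =>
    rw [outcome, reachesFinal_iff_macroStep]
    cases hm : M.macroStep (p, γ, w) <;> by_cases h : M.EpsReachesFinal (p, γ) ∧ w ∈ Y <;>
      simp [outcome, h]
  | some q => rw [outcome, popResult_eq_macroStep, Option.bind_assoc]; rfl

theorem outcome_cons (ρ : Option Q) (p : Q) (Z : Γ) (δ : List Γ) (u : List A) :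
    M.outcome Y ρ (p, Z :: δ, u) =
      (ρ.elim (M.outcome Y none (p, [Z], u)) fun _ => none).or
        ((M.popResult (p, [Z], u)).bind fun x => M.outcome Y ρ (x.1, δ, x.2)) := by
  cases ρ with
  | none =>
    rw [outcome, reachesFinal_cons_iff]
    cases hx : M.popResult (p, [Z], u) <;> by_cases h : M.ReachesFinal Y (p, [Z], u) <;>
      simp [outcome, h]
  | some q =>
    show (M.popResult _).bind _ = _
    rw [popResult_cons p Z δ u, Option.bind_assoc]
    rfl

end Outcome

end DPDA

/-! ### A PEG for `XY` -/

namespace ConcatPEG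

open PExp DPDA

variable {Q A Γ NY : Type} [Fintype A] [Fintype Q] (M : DPDA Q A Γ) (GY : PEG NY A)

open scoped Classical

abbrev NT (Q Γ NY : Type) : Type := NY ⊕ (Q × Γ × Option Q)

def sim (p : Q) (Z : Γ) (ρ : Option Q) : PExp (NT Q Γ NY) A := .nt (.inr (p, Z, ρ))

noncomputable def acceptIf (b : Prop) : PExp (NT Q Γ NY) A :=
  if b then .seq (.nt (.inl GY.start)) atEnd else fail

noncomputable def popThen (p : Q) (Z : Γ) (k : Q → PExp (NT Q Γ NY) A) : PExp (NT Q Γ NY) A :=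
  choiceAll fun s => .seq (sim p Z (some s)) (k s)

noncomputable def cont (ρ : Option Q) : List Γ → Q → PExp (NT Q Γ NY) A
  | [], p => ρ.elim (acceptIf GY (M.final p = true)) fun q => if p = q then .eps else fail
  | Z :: δ, p => .choice (ρ.elim (sim p Z none) fun _ => fail) (popThen p Z (cont ρ δ))

noncomputable def afterEps (ρ : Option Q) : Option (Q × List Γ) → PExp (NT Q Γ NY) A
  | some (r, []) => cont M GY ρ [] r
  | some (q, Z :: δ) =>
    dispatch fun a => (M.transA q a Z).elim fail fun x => cont M GY ρ (x.2 ++ δ) x.1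
  | none => fail

noncomputable def grammar : PEG (NT Q Γ NY) A where
  rule
    | .inl B => (GY.rule B).mapN .inl
    | .inr (p, Z, ρ) =>
      .choice (ρ.elim (acceptIf GY (M.EpsReachesFinal (p, [Z]))) fun _ => fail)
        (afterEps M GY ρ (M.epsLimit (p, [Z])))
  start := .inr (M.init, M.Z0, none)

variable {M GY}

theorem parses_acceptIf [Finite NY] (hGY : GY.WellFormed) (b : Prop) [Decidable b] (w : List A) :
    Parses (grammar M GY) (acceptIf GY b) w (if b ∧ w ∈ GY.Lang then some [] else none) := by
  by_cases hb : b
  · obtain ⟨r, hr⟩ := hGY.exists_parses w (.nt GY.start)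
    have hr' : Parses (grammar M GY) (.nt (.inl GY.start)) w r := hr.mapN fun _ => rfl
    rw [acceptIf, if_pos hb]
    match r, hr, hr' with
    | none, hr, hr' =>
      have hw : w ∉ GY.Lang := fun hw => by cases hr.det hw
      simpa [hb, hw] using Parses.seq_fail hr'
    | some [], hr, hr' => simpa [hb, PEG.Lang, hr] using Parses.seq_ok hr' Parses.atEnd_nil
    | some (a :: u), hr, hr' =>
      have hw : w ∉ GY.Lang := fun hw => by cases hr.det hw
      simpa [hb, hw] using Parses.seq_ok hr' (Parses.atEnd_cons a u)
  · simpa [acceptIf, hb] using Parses.fail (G := grammar M GY) w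

theorem parses_cont_nil [Finite NY] (hGY : GY.WellFormed) (ρ : Option Q) (p : Q) (u : List A) :
    Parses (grammar M GY) (cont M GY ρ [] p) u (M.outcome GY.Lang ρ (p, [], u)) := by
  rw [outcome_nil]
  cases ρ with
  | none => exact parses_acceptIf (M := M) hGY (M.final p = true) u
  | some q =>
    by_cases hpq : p = q
    · simpa [cont, hpq] using Parses.eps u
    · simpa [cont, hpq] using Parses.fail u

variable (M GY) in
def SimCorrect (w : List A) : Prop :=
  ∀ p Z ρ, Parses (grammar M GY) (sim p Z ρ) w (M.outcome GY.Lang ρ (p, [Z], w))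

theorem parses_popThen {p : Q} {Z : Γ} {u : List A} (hsim : SimCorrect M GY u)
    {k : Q → PExp (NT Q Γ NY) A} {R : Q → List A → Option (List A)}
    (hk : ∀ x, M.popResult (p, [Z], u) = some x →
      Parses (grammar M GY) (k x.1) x.2 (R x.1 x.2)) :
    Parses (grammar M GY) (popThen p Z k) u
      ((M.popResult (p, [Z], u)).bind fun x => R x.1 x.2) := by
  cases hx : M.popResult (p, [Z], u) with
  | none => exact Parses.choiceAll_none fun s => .seq_fail (by simpa [outcome, hx] using hsim p Z s)
  | some x =>
    refine Parses.choiceAll (i := x.1) (.seq_ok (by simpa [outcome, hx] using hsim p Z x.1)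
      (hk x hx)) fun s hs => .seq_fail ?_
    simpa [outcome, hx, Ne.symm hs] using hsim p Z s

theorem parses_cont [Finite NY] (hGY : GY.WellFormed) (ρ : Option Q) (γ : List Γ) (p : Q)
    (u : List A) (hsim : ∀ v : List A, v.length ≤ u.length → SimCorrect M GY v) :
    Parses (grammar M GY) (cont M GY ρ γ p) u (M.outcome GY.Lang ρ (p, γ, u)) := by
  induction γ generalizing p u with
  | nil => exact parses_cont_nil hGY ρ p u
  | cons Z δ ih =>
    rw [outcome_cons]
    have hpop := parses_popThen (p := p) (Z := Z) (k := cont M GY ρ δ)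
      (R := fun s v => M.outcome GY.Lang ρ (s, δ, v)) (hsim u le_rfl) fun x hx =>
        ih x.1 x.2 fun v hv =>
          hsim v (hv.trans (isSuffix_of_reach (popResult_eq_some_iff.mp hx)).length_le)
    refine .choice_or ?_ hpop
    cases ρ
    · exact hsim u le_rfl p Z none
    · exact .fail u

theorem parses_afterEps [Finite NY] (hGY : GY.WellFormed) (ρ : Option Q) (p : Q) (γ : List Γ)
    (w : List A) (hsim : ∀ v : List A, v.length < w.length → SimCorrect M GY v) :
    Parses (grammar M GY) (afterEps M GY ρ (M.epsLimit (p, γ))) w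
      ((M.macroStep (p, γ, w)).bind (M.outcome GY.Lang ρ)) := by
  match hlim : M.epsLimit (p, γ), w with
  | some (r, []), w =>
    simpa [afterEps, macroStep, hlim] using parses_cont_nil hGY ρ r w
  | some (q, Z :: δ), [] => simpa [afterEps, macroStep, hlim] using Parses.dispatch_nil _
  | some (q, Z :: δ), a :: u =>
    simp only [afterEps, macroStep, hlim]
    refine Parses.dispatch_cons ?_
    cases M.transA q a Z with
    | none => exact .fail u
    | some x => exact parses_cont hGY ρ _ _ u fun v hv => hsim v (by simp; omega)
  | none, w => simpa [afterEps, macroStep, hlim] using Parses.fail w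

theorem simCorrect [Finite NY] (hGY : GY.WellFormed) (w : List A) : SimCorrect M GY w := by
  intro p Z ρ
  refine .nt ?_
  rw [outcome_eq_macroStep]
  refine .choice_or ?_ (parses_afterEps hGY ρ p [Z] w fun v _ => simCorrect hGY v)
  cases ρ
  · exact parses_acceptIf hGY _ w
  · exact .fail w
termination_by w.length

theorem lang_grammar [Finite NY] (hGY : GY.WellFormed) :
    (grammar M GY).Lang = concatL M.Lang GY.Lang := by
  ext w
  rw [mem_concatL_iff_reachesFinal]
  have h := simCorrect (M := M) hGY w M.init M.Z0 none
  constructor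
  · intro hw
    by_contra hF
    simpa [outcome, hF] using hw.det h
  · intro hF
    show Parses _ (sim M.init M.Z0 none) w _
    simpa [outcome, hF] using h

theorem wellFormed_grammar (hGY : GY.WellFormed) : (grammar M GY).WellFormed := by
  refine hGY.of_sum (fun _ => rfl) fun ⟨p, Z, ρ⟩ => ?_
  have hacc (b : Prop) : (acceptIf GY b : PExp (NT Q Γ NY) A).leftNts ⊆ Set.range .inl := by
    unfold acceptIf
    split_ifs <;> simp [leftNts, maybeEmpty]
  have hafter (o : Option (Q × List Γ)) : (afterEps M GY ρ o).leftNts ⊆ Set.range .inl := by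
    match o, ρ with
    | some (r, []), none => exact hacc _
    | some (r, []), some q => simp only [afterEps, cont, Option.elim]; split_ifs <;> simp [leftNts]
    | some (q, Z :: δ), _ => simp [afterEps]
    | none, _ => simp [afterEps]
  refine Set.union_subset ?_ (hafter _)
  cases ρ
  · exact hacc _
  · simp

end ConcatPEG

/-- If `X` is a DCFL and `Y` is a PEL, then `XY` is a PEL. -/
theorem dcfl_concat_pel {A : Type} [Finite A] (X Y : Set (List A))
    (hX : IsDCFL X) (hY : IsPEL Y) : IsPEL (concatL X Y) := by
  obtain ⟨Q, Γ, _, _, M, rfl⟩ := hX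
  obtain ⟨NY, _, GY, hGY, rfl⟩ := hY
  have := Fintype.ofFinite A
  have := Fintype.ofFinite Q
  exact ⟨_, inferInstance, ConcatPEG.grammar M GY, ConcatPEG.wellFormed_grammar hGY,
    ConcatPEG.lang_grammar hGY⟩
end
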